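/- arXiv:2303.00254 — 9 statements merged into one kernel-verified Lean document; each statement's English description precedes it below -/
import Mathlib

section
/- Let G be a finite group, N an abelian normal subgroup of G, and H a subgroup of G with N ≤ H such that N has a complement in H and gcd(|N|, [G : H]) = 1. Then N has a complement in G. -/
open Pointwise
/-- `K` is a complement of `N` inside the subgroup `H` of `G`:
`K ≤ H`, `K ∩ N = 1` and `KN = H` (as sets). -/
def IsComplementOfIn {G : Type*} [Group G] (K N H : Subgroup G) : Prop :=
  K ≤ H ∧ K ⊓ N = ⊥ ∧ (K : Set G) * (N : Set G) = (H : Set G)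

/-- `N` has a complement in the subgroup `H` of `G`. -/
def HasComplementIn {G : Type*} [Group G] (N H : Subgroup G) : Prop :=
  ∃ K : Subgroup G, IsComplementOfIn K N H

/-!
Let `K` be a complement of `N` in `H`. Writing `h = δ(h) k` with `δ(h) ∈ N`, `k ∈ K` defines a
crossed homomorphism `δ : H → N` (for the conjugation action) which is the identity on `N`.
Its corestriction `φ : G → N` is a crossed homomorphism on all of `G` with `φ(a) = a ^ [G : H]`
for `a ∈ N`. Since `a ↦ a ^ [G : H]` is bijective on `N`, the kernel of `φ` meets `N` trivially,
and every coset `gN` contains an element of the kernel: it is a complement of `N` in `G`.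
-/

open scoped IsMulCommutative

section

variable {G : Type*} [Group G] {N : Subgroup G}

open Classical in
noncomputable def complementProj (N K : Subgroup G) (g : G) : N :=
  if h : ∃ a : N, (a : G)⁻¹ * g ∈ K then h.choose else 1

section complementProj

variable {K H : Subgroup G}

theorem complementProj_eq (hKN : K ⊓ N = ⊥) {g : G} (a : N) (ha : (a : G)⁻¹ * g ∈ K) :
    complementProj N K g = a := by
  have hex : ∃ b : N, (b : G)⁻¹ * g ∈ K := ⟨a, ha⟩
  rw [complementProj, dif_pos hex]
  have hmem : (a : G)⁻¹ * hex.choose ∈ K ⊓ N := Subgroup.mem_inf.mpr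
    ⟨by simpa [mul_assoc] using mul_mem ha (inv_mem hex.choose_spec),
      mul_mem (inv_mem a.2) hex.choose.2⟩
  rw [hKN, Subgroup.mem_bot, inv_mul_eq_one] at hmem
  exact Subtype.ext hmem.symm

theorem complementProj_coe (hKN : K ⊓ N = ⊥) (a : N) : complementProj N K a = a :=
  complementProj_eq hKN a (by simp)

end complementProj

variable [N.Normal]

def IsConjCrossedHomOn (S : Subgroup G) (φ : G → N) : Prop :=
  ∀ g ∈ S, ∀ g' ∈ S, φ (g * g') = φ g * MulAut.conjNormal g (φ g')

namespace IsConjCrossedHomOn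

variable {S : Subgroup G} {φ : G → N}

theorem map_one (hφ : IsConjCrossedHomOn S φ) : φ 1 = 1 := by
  simpa using hφ 1 S.one_mem 1 S.one_mem

def ker (hφ : IsConjCrossedHomOn ⊤ φ) : Subgroup G where
  carrier := {g | φ g = 1}
  one_mem' := hφ.map_one
  mul_mem' {g g'} (hg : φ g = 1) (hg' : φ g' = 1) := show φ (g * g') = 1 by
    rw [hφ g trivial g' trivial, hg, hg', MulEquiv.map_one, one_mul]
  inv_mem' {g} (hg : φ g = 1) := show φ g⁻¹ = 1 by
    simpa [hφ.map_one, hg] using (hφ g⁻¹ trivial g trivial).symm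

theorem mem_ker {hφ : IsConjCrossedHomOn ⊤ φ} {g : G} : g ∈ hφ.ker ↔ φ g = 1 := Iff.rfl

theorem ker_isComplementOfIn [IsMulCommutative N] (hφ : IsConjCrossedHomOn ⊤ φ) {n : ℕ}
    (hn : (Nat.card N).Coprime n) (hpow : ∀ a : N, φ a = a ^ n) :
    IsComplementOfIn hφ.ker N ⊤ := by
  have hbij := Nat.Coprime.pow_left_bijective hn
  refine ⟨le_top, ?_, ?_⟩
  · rw [eq_bot_iff]
    rintro x ⟨hxK, hxN⟩
    have : (⟨x, hxN⟩ : N) ^ n = 1 ^ n := by rw [← hpow, one_pow]; exact hxK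
    simpa using congrArg Subtype.val (hbij.injective this)
  · rw [← Subgroup.mul_normal, SetLike.coe_set_eq, eq_top_iff]
    intro g _
    obtain ⟨a, ha : a ^ n = (φ g)⁻¹⟩ := hbij.surjective (φ g)⁻¹
    have hag : (a : G) * g ∈ hφ.ker := by
      rw [mem_ker, hφ _ trivial _ trivial, hpow, ha, MulAut.conjNormal_val, MulAut.conj_apply,
        mul_inv_cancel_comm, inv_mul_cancel]
    simpa using mul_mem (Subgroup.mem_sup_right (inv_mem a.2)) (Subgroup.mem_sup_left hag)

end IsConjCrossedHomOn

section complementProj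

variable {K H : Subgroup G}

theorem complementProj_inv_mul_mem (hK : IsComplementOfIn K N H) {h : G} (hh : h ∈ H) :
    (complementProj N K h : G)⁻¹ * h ∈ K := by
  obtain ⟨k, hk, n, hn, rfl⟩ : h ∈ (K : Set G) * N := hK.2.2 ▸ hh
  have hkn : (k * n * k⁻¹)⁻¹ * (k * n) = k := by group
  rwa [complementProj_eq hK.2.1 ⟨k * n * k⁻¹, Subgroup.Normal.conj_mem ‹_› n hn k⟩
    (by rwa [hkn]), hkn]

theorem isConjCrossedHomOn_complementProj [IsMulCommutative N] (hK : IsComplementOfIn K N H) :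
    IsConjCrossedHomOn H (complementProj N K) := by
  intro h hh h' hh'
  apply complementProj_eq hK.2.1
  have key : ((complementProj N K h * MulAut.conjNormal h (complementProj N K h') : N) : G)⁻¹ *
      (h * h') = ((complementProj N K h : G)⁻¹ * h) * ((complementProj N K h' : G)⁻¹ * h') := by
    rw [← Subgroup.coe_inv, mul_inv, Subgroup.coe_mul, Subgroup.coe_inv, Subgroup.coe_inv,
      MulAut.conjNormal_apply]
    group
  rw [key]
  exact mul_mem (complementProj_inv_mul_mem hK hh) (complementProj_inv_mul_mem hK hh')

end complementProj

section cores

variable (H : Subgroup G) {δ : G → N}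

theorem out_smul_inv_mul_mem (g : G) (q : G ⧸ H) : (g • q).out⁻¹ * (g * q.out) ∈ H := by
  rw [← QuotientGroup.eq, QuotientGroup.out_eq']
  conv_lhs => rw [← QuotientGroup.out_eq' q]
  rfl

noncomputable def coresTerm (δ : G → N) (g : G) (q : G ⧸ H) : N :=
  MulAut.conjNormal (g • q).out (δ ((g • q).out⁻¹ * (g * q.out)))

/-- The corestriction of `δ` from `H` to `G`, computed with the transversal `Quotient.out`. -/
noncomputable def cores [Fintype (G ⧸ H)] [IsMulCommutative N] (δ : G → N) (g : G) : N :=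
  ∏ q : G ⧸ H, coresTerm H δ g q

variable {H}

theorem coresTerm_mul (hδ : IsConjCrossedHomOn H δ) (g g' : G) (q : G ⧸ H) :
    coresTerm H δ (g * g') q =
      coresTerm H δ g (g' • q) * MulAut.conjNormal g (coresTerm H δ g' q) := by
  set u := (g' • q).out
  set v := (g • g' • q).out
  have hsplit : v⁻¹ * (g * g' * q.out) = (v⁻¹ * (g * u)) * (u⁻¹ * (g' * q.out)) := by group
  rw [coresTerm, mul_smul, hsplit, hδ _ (out_smul_inv_mul_mem H g _) _
    (out_smul_inv_mul_mem H g' q), map_mul, ← MulAut.mul_apply, ← map_mul,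
    show v * (v⁻¹ * (g * u)) = g * u by group, map_mul, MulAut.mul_apply]
  rfl

theorem isConjCrossedHomOn_cores [Fintype (G ⧸ H)] [IsMulCommutative N]
    (hδ : IsConjCrossedHomOn H δ) :
    IsConjCrossedHomOn ⊤ (cores H δ) := by
  intro g _ g' _
  calc cores H δ (g * g')
      = ∏ q : G ⧸ H, coresTerm H δ g (g' • q) * MulAut.conjNormal g (coresTerm H δ g' q) :=
        Finset.prod_congr rfl fun q _ ↦ coresTerm_mul hδ g g' q
    _ = cores H δ g * MulAut.conjNormal g (cores H δ g') := by
        rw [Finset.prod_mul_distrib, cores, cores, map_prod]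
        congr 1
        exact Equiv.prod_comp (MulAction.toPerm g' : Equiv.Perm (G ⧸ H)) (coresTerm H δ g)

theorem cores_coe [Fintype (G ⧸ H)] [IsMulCommutative N] (hNH : N ≤ H)
    (hδ : ∀ a : N, δ a = a) (a : N) :
    cores H δ a = a ^ Fintype.card (G ⧸ H) := by
  have hterm (q : G ⧸ H) : coresTerm H δ a q = a := by
    have hfix : (a : G) • q = q := by
      induction q using QuotientGroup.induction_on with | H x => ?_
      refine QuotientGroup.eq.mpr (hNH ?_)
      simpa [mul_assoc] using Subgroup.Normal.conj_mem ‹_› _ (inv_mem a.2) x⁻¹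
    have hconj : q.out⁻¹ * (a * q.out) ∈ N := by
      simpa [mul_assoc] using Subgroup.Normal.conj_mem ‹_› _ a.2 q.out⁻¹
    rw [coresTerm, hfix, hδ ⟨_, hconj⟩]
    ext
    simp [MulAut.conjNormal_apply, mul_assoc]
  simp only [cores, hterm, Finset.prod_const, Finset.card_univ]

end cores

end

/-- **Gaschütz' theorem.** If `N` is an abelian normal subgroup of a finite group `G`,
`N ≤ H ≤ G`, `N` has a complement in `H` and `gcd(|N|, [G : H]) = 1`, then `N` has a
complement in `G`. -/
theorem gaschuetz {G : Type*} [Group G] [Finite G] (N H : Subgroup G)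
    [N.Normal] [IsMulCommutative N] (hNH : N ≤ H)
    (hcop : Nat.Coprime (Nat.card N) H.index)
    (hcompl : HasComplementIn N H) :
    HasComplementIn N ⊤ := by
  obtain ⟨K, hK⟩ := hcompl
  have : Fintype (G ⧸ H) := Fintype.ofFinite _
  have hφ := isConjCrossedHomOn_cores (isConjCrossedHomOn_complementProj hK)
  refine ⟨hφ.ker, hφ.ker_isComplementOfIn hcop fun a ↦ ?_⟩
  rw [cores_coe hNH (complementProj_coe hK.2.1), H.index_eq_card, Nat.card_eq_fintype_card]
end

section
/- Let N be a normal subgroup of a finite group G and H a subgroup of G with G = HN. Then there exists a subgroup H₁ ≤ H such that G = H₁N and H₁ ∩ N is contained in the Frattini subgroup of H₁; moreover, for such an H₁, the set of prime divisors of |H₁| equals the set of prime divisors of [G : N]. -/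
/- If `H₁ ∩ N` is not in `Φ(H₁)`, some maximal subgroup `M` of `H₁` misses it, and then `M`
still supplements `N`; so a minimal supplement `H₁ ≤ H` of `N` has `H₁ ∩ N ≤ Φ(H₁)`. For the
primes, put `D = H₁ ∩ N`, a normal subgroup of `H₁` inside `Φ(H₁)` with `|H₁ : D| = |G : N|`.
If `p` divided `|D|` but not `|H₁ : D|`, a Sylow `p`-subgroup `P` of `D` would be normal in `H₁`
by the Frattini argument, hence a normal Hall subgroup of `H₁`; by Schur–Zassenhaus it has a
complement, which together with `P ≤ Φ(H₁)` generates `H₁`, so the complement is `H₁` and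
`P = 1`, a contradiction. -/

open Pointwise

namespace Subgroup

variable {G : Type*} [Group G]

theorem exists_lt_sup_eq_top_of_not_subgroupOf_le_frattini {N K : Subgroup G} (hK : K ⊔ N = ⊤)
    (hN : ¬ N.subgroupOf K ≤ frattini K) : ∃ L < K, L ⊔ N = ⊤ := by
  obtain ⟨M, hM, hNM⟩ : ∃ M : Subgroup K, IsCoatom M ∧ ¬ N.subgroupOf K ≤ M := by
    by_contra! h
    exact hN (le_iInf₂ h)
  have hMN : M ⊔ N.subgroupOf K = ⊤ := hM.2 _ (left_lt_sup.mpr hNM)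
  refine ⟨M.map K.subtype, (map_subtype_le M).lt_of_ne fun h => hM.1 ?_, ?_⟩
  · apply map_injective K.subtype_injective
    rw [h, ← MonoidHom.range_eq_map, range_subtype]
  · have hKle : K ≤ M.map K.subtype ⊔ N :=
      calc K = (⊤ : Subgroup K).map K.subtype := by rw [← MonoidHom.range_eq_map, range_subtype]
        _ = M.map K.subtype ⊔ N ⊓ K := by rw [← hMN, map_sup, subgroupOf_map_subtype]
        _ ≤ M.map K.subtype ⊔ N := sup_le_sup_left inf_le_left _
    rw [eq_top_iff, ← hK]
    exact sup_le hKle le_sup_right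

theorem exists_le_sup_eq_top_subgroupOf_le_frattini [Finite G] {N K : Subgroup G}
    (hK : K ⊔ N = ⊤) : ∃ H₁ ≤ K, H₁ ⊔ N = ⊤ ∧ N.subgroupOf H₁ ≤ frattini H₁ := by
  induction K using WellFoundedLT.induction with
  | _ K ih =>
    by_cases hN : N.subgroupOf K ≤ frattini K
    · exact ⟨K, le_rfl, hK, hN⟩
    · obtain ⟨L, hLK, hL⟩ := exists_lt_sup_eq_top_of_not_subgroupOf_le_frattini hK hN
      obtain ⟨H₁, hH₁L, hH₁⟩ := ih L hLK hL
      exact ⟨H₁, hH₁L.trans hLK.le, hH₁⟩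

theorem index_subgroupOf_of_sup_eq_top {N K : Subgroup G} [N.Normal] (hK : K ⊔ N = ⊤) :
    (N.subgroupOf K).index = N.index := by
  rw [← relIndex, ← relIndex_sup_right, hK, relIndex_top_right]

variable [Finite G]

theorem eq_bot_of_le_frattini_of_coprime {Q : Subgroup G} [Q.Normal] (hQ : Q ≤ frattini G)
    (hcop : (Nat.card Q).Coprime Q.index) : Q = ⊥ := by
  obtain ⟨C, hC⟩ := exists_right_complement'_of_coprime hcop
  have hCtop : C = ⊤ := frattini_nongenerating <| by
    rw [eq_top_iff, ← hC.sup_eq_top]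
    exact sup_le (hQ.trans le_sup_right) le_sup_left
  simpa [hCtop] using hC.disjoint

theorem normal_map_subtype_sylow_of_le_frattini {p : ℕ} [Fact p.Prime] {D : Subgroup G} [D.Normal]
    (hD : D ≤ frattini G) (P : Sylow p D) : ((P : Subgroup D).map D.subtype).Normal :=
  normalizer_eq_top_iff.mp <| frattini_nongenerating <| by
    rw [eq_top_iff, ← Sylow.normalizer_sup_eq_top P]
    exact sup_le le_sup_left (hD.trans le_sup_right)

theorem prime_dvd_index_of_dvd_card_of_le_frattini {D : Subgroup G} [D.Normal]
    (hD : D ≤ frattini G) {p : ℕ} (hp : p.Prime) (hpD : p ∣ Nat.card D) : p ∣ D.index := by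
  have := Fact.mk hp
  by_contra hpi
  obtain ⟨P⟩ : Nonempty (Sylow p D) := inferInstance
  set Q := (P : Subgroup D).map D.subtype
  have := normal_map_subtype_sylow_of_le_frattini hD P
  have hcard : Nat.card Q = Nat.card P := card_map_of_injective D.subtype_injective
  have hindex : Q.index = (P : Subgroup D).index * D.index := by
    rw [← relIndex_mul_index (map_subtype_le _), relIndex, subgroupOf,
      comap_map_eq_self_of_injective D.subtype_injective]
  have hcop : (Nat.card Q).Coprime Q.index := by
    obtain ⟨n, hn⟩ := P.2.exists_card_eq
    rw [hcard, hindex]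
    exact P.card_coprime_index.mul_right (hn ▸ (hp.coprime_iff_not_dvd.mpr hpi).pow_left n)
  exact P.ne_bot_of_dvd_card hpD <| (map_eq_bot_iff_of_injective _ D.subtype_injective).mp
    (eq_bot_of_le_frattini_of_coprime (map_subtype_le _ |>.trans hD) hcop)

theorem prime_dvd_card_iff_dvd_index_of_le_frattini {D : Subgroup G} [D.Normal]
    (hD : D ≤ frattini G) {p : ℕ} (hp : p.Prime) : p ∣ Nat.card G ↔ p ∣ D.index := by
  rw [← D.card_mul_index]
  exact ⟨fun h => (hp.dvd_mul.mp h).elim (prime_dvd_index_of_dvd_card_of_le_frattini hD hp) id,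
    fun h => h.mul_left _⟩

end Subgroup

/-- Let `N ⊴ G` and `H ≤ G` with `G = HN`. Then there is `H₁ ≤ H` with `G = H₁N` and
`H₁ ∩ N ≤ Φ(H₁)`; moreover, for any such `H₁`, the primes dividing `|H₁|` are exactly
the primes dividing `[G : N]`. -/
theorem exists_le_frattini_inter {G : Type*} [Group G] [Finite G]
    (N H : Subgroup G) [N.Normal] (hHN : (H : Set G) * (N : Set G) = Set.univ) :
    (∃ H₁ : Subgroup G, H₁ ≤ H ∧ (H₁ : Set G) * (N : Set G) = Set.univ ∧
      (H₁ ⊓ N).subgroupOf H₁ ≤ frattini H₁) ∧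
    (∀ H₁ : Subgroup G, H₁ ≤ H → (H₁ : Set G) * (N : Set G) = Set.univ →
      (H₁ ⊓ N).subgroupOf H₁ ≤ frattini H₁ →
      ∀ p : ℕ, p.Prime → (p ∣ Nat.card H₁ ↔ p ∣ N.index)) := by
  have hsup (K : Subgroup G) : (K : Set G) * (N : Set G) = Set.univ ↔ K ⊔ N = ⊤ := by
    rw [← Subgroup.mul_normal, Subgroup.coe_eq_univ]
  simp only [hsup, Subgroup.inf_subgroupOf_left] at hHN ⊢
  refine ⟨Subgroup.exists_le_sup_eq_top_subgroupOf_le_frattini hHN, fun H₁ _ hH₁N hfr p hp => ?_⟩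
  rw [Subgroup.prime_dvd_card_iff_dvd_index_of_le_frattini hfr hp,
    Subgroup.index_subgroupOf_of_sup_eq_top hH₁N]
end

section
/- (Rose) For a finite group N the following are equivalent: (1) the center Z(N) is trivial and the inner automorphism group Inn(N) has a complement in the automorphism group Aut(N); (2) whenever N is (embedded as) a normal subgroup of a finite group G, the image of N has a complement in G. -/
/-!
If `Z(N) = 1`, conjugation `G → Aut(N)` maps the normal subgroup `N` isomorphically onto
`Inn(N)`, so the preimage of a complement of `Inn(N)` is a complement of `N`; and `Inn(N) ≅ N` is
itself normal in `Aut(N)`. If `1 ≠ z ∈ Z(N)`, form the central product of `N` with a cyclic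
group `⟨c⟩` of order `|z| · |N|`, identifying `z` with `c ^ |N|`. Every `x` in the coset `cN` satisfies
`x ^ |N| = z ≠ 1`, while a complement of `N` would contain an element of `cN` whose order divides
the order of `cN` in the quotient, hence divides `|N|`.
-/

open Pointwise

universe u

/-- Gaschütz' theorem holds for the finite group `N`: whenever `N` is embedded as a
normal subgroup of a finite group `G`, `H` is a subgroup with `N ≤ H ≤ G`,
`gcd(|N|, [G : H]) = 1` and `N` has a complement in `H`, then `N` has a complement
in `G`. -/
def GaschuetzHolds (N : Type u) [Group N] : Prop :=
  ∀ (G : Type u) [Group G] [Finite G] (f : N →* G) (H : Subgroup G),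
    Function.Injective f → f.range.Normal → f.range ≤ H →
    Nat.Coprime (Nat.card N) H.index →
    HasComplementIn f.range H → HasComplementIn f.range ⊤

open Subgroup

theorem HasComplementIn.of_comp {N G A : Type*} [Group N] [Group G] [Group A] {f : N →* G}
    {φ : G →* A} (hφf : HasComplementIn (φ.comp f).range ⊤)
    (hinj : Function.Injective (φ.comp f)) : HasComplementIn f.range ⊤ := by
  obtain ⟨K, -, hK, hKmul⟩ := hφf
  refine ⟨K.comap φ, le_top, ?_, ?_⟩
  · rw [eq_bot_iff_forall]
    intro x hx
    obtain ⟨hxK, n, rfl⟩ := mem_inf.mp hx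
    have hn : φ.comp f n ∈ K ⊓ (φ.comp f).range := ⟨hxK, n, rfl⟩
    rw [hK, mem_bot, ← map_one (φ.comp f)] at hn
    rw [hinj hn, map_one]
  · refine Set.eq_univ_of_forall fun g => ?_
    have hg : φ g ∈ (K : Set A) * (φ.comp f).range := by rw [hKmul]; trivial
    obtain ⟨k, hk, _, ⟨n, rfl⟩, hkn⟩ := hg
    refine ⟨g * (f n)⁻¹, ?_, f n, ⟨n, rfl⟩, inv_mul_cancel_right g (f n)⟩
    simpa [← hkn] using hk

theorem not_hasComplementIn_top_of_forall_pow_ne_one {G : Type*} [Group G] {M : Subgroup G}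
    [M.Normal] {g : G} {q : ℕ} (hq : g ^ q ∈ M) (h : ∀ m ∈ M, (g * m) ^ q ≠ 1) :
    ¬ HasComplementIn M ⊤ := by
  rintro ⟨K, -, hKM, hKMmul⟩
  have hg : g ∈ (K : Set G) * M := by rw [hKMmul]; trivial
  obtain ⟨k, hk, m, hm, rfl⟩ := hg
  -- `k` and `k * m` have the same image in `G ⧸ M`, so `k ^ q ∈ K ⊓ M`.
  have hkq : k ^ q ∈ K ⊓ M := by
    refine ⟨pow_mem hk q, (QuotientGroup.eq_one_iff _).mp ?_⟩
    rw [QuotientGroup.mk_pow, ← QuotientGroup.mk_mul_of_mem k hm, ← QuotientGroup.mk_pow]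
    exact (QuotientGroup.eq_one_iff _).mpr hq
  rw [hKM, mem_bot] at hkq
  exact h m⁻¹ (inv_mem hm) (by rwa [mul_inv_cancel_right])

theorem MulAut.ker_conj (G : Type*) [Group G] :
    (MulAut.conj : G →* MulAut G).ker = center G := by
  ext g
  simp [MulEquiv.ext_iff, mem_center_iff, eq_mul_inv_iff_mul_eq, eq_comm]

theorem MulAut.normal_range_conj (G : Type*) [Group G] :
    (MulAut.conj : G →* MulAut G).range.Normal where
  conj_mem := by
    rintro _ ⟨n, rfl⟩ ψ
    refine ⟨ψ n, MulEquiv.ext fun g => ?_⟩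
    simp

theorem exists_comp_eq_conj {N G : Type*} [Group N] [Group G] {f : N →* G}
    (hf : Function.Injective f) [f.range.Normal] :
    ∃ φ : G →* MulAut N, φ.comp f = MulAut.conj := by
  let e : N ≃* f.range := MonoidHom.ofInjective hf
  refine ⟨(MulAut.congr e.symm).toMonoidHom.comp MulAut.conjNormal, ?_⟩
  ext n x
  simp [e, MulEquiv.symm_apply_eq, Subtype.ext_iff, MonoidHom.ofInjective_apply]

theorem normal_zpowers_of_mem_center {G : Type*} [Group G] {x : G} (hx : x ∈ center G) :
    (zpowers x).Normal where
  conj_mem n hn g := by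
    rwa [mem_center_iff.mp (zpowers_le.mpr hx hn) g, mul_inv_cancel_right]

section CentralProduct

variable {N C : Type*} [Group N] [Group C] {z : N} {w : C} [(zpowers (z⁻¹, w)).Normal]

variable (z w) in
/-- The first factor of the central product `(N × C) ⧸ ⟨(z⁻¹, w)⟩`, in which `z` and `w` are
identified. -/
abbrev centralProductInl : N →* (N × C) ⧸ zpowers (z⁻¹, w) :=
  (QuotientGroup.mk' _).comp (MonoidHom.inl N C)

theorem centralProductInl_injective (h : orderOf z ∣ orderOf w) :
    Function.Injective (centralProductInl z w) := by
  rw [← MonoidHom.ker_eq_bot_iff, eq_bot_iff_forall]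
  intro n hn
  obtain ⟨k, hk⟩ := mem_zpowers_iff.mp ((QuotientGroup.eq_one_iff _).mp hn)
  simp only [Prod.pow_mk, MonoidHom.inl_apply, Prod.mk.injEq] at hk
  have hzk : z ^ k = 1 := orderOf_dvd_iff_zpow_eq_one.mp
    ((Int.natCast_dvd_natCast.mpr h).trans (orderOf_dvd_iff_zpow_eq_one.mpr hk.2))
  rw [← hk.1, inv_zpow, hzk, inv_one]

instance centralProductInl_range_normal : (centralProductInl z w).range.Normal where
  conj_mem := by
    rintro _ ⟨n, rfl⟩ g
    obtain ⟨⟨a, c⟩, rfl⟩ := QuotientGroup.mk'_surjective _ g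
    refine ⟨a * n * a⁻¹, ?_⟩
    simp only [MonoidHom.comp_apply, ← map_inv, ← map_mul]
    congr 1
    ext <;> simp

end CentralProduct

theorem not_hasComplementIn_range_centralProductInl {N C : Type*} [Group N] [Group C]
    [Finite N] {z : N} {c : C} [(zpowers (z⁻¹, c ^ Nat.card N)).Normal] (hz : z ≠ 1)
    (hinj : Function.Injective (centralProductInl z (c ^ Nat.card N))) :
    ¬ HasComplementIn (centralProductInl z (c ^ Nat.card N)).range ⊤ := by
  set f := centralProductInl z (c ^ Nat.card N)
  set g : (N × C) ⧸ zpowers (z⁻¹, c ^ Nat.card N) := QuotientGroup.mk (1, c)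
  have hgq : g ^ Nat.card N = f z := by
    rw [← QuotientGroup.mk_pow, eq_comm]
    refine QuotientGroup.eq.mpr ?_
    simp
  refine not_hasComplementIn_top_of_forall_pow_ne_one (by rw [hgq]; exact ⟨z, rfl⟩) ?_
  rintro _ ⟨n, rfl⟩
  have hcomm : Commute g (f n) := by
    change (QuotientGroup.mk ((1, c) * (n, 1)) : (N × C) ⧸ _) =
      QuotientGroup.mk ((n, 1) * (1, c))
    simp
  rw [hcomm.mul_pow, hgq, ← map_pow, pow_card_eq_one', map_one, mul_one]
  exact (map_ne_one_iff f hinj).mpr hz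

theorem exists_not_hasComplementIn_of_center_ne_bot {N : Type u} [Group N] [Finite N]
    (hN : center N ≠ ⊥) :
    ∃ (G : Type u) (_ : Group G) (_ : Finite G) (f : N →* G),
      Function.Injective f ∧ f.range.Normal ∧ ¬ HasComplementIn f.range ⊤ := by
  obtain ⟨z, hz, hz1⟩ := (center N).bot_or_exists_ne_one.resolve_left hN
  set q := Nat.card N
  let C := Multiplicative (ZMod (orderOf z * q))
  have : NeZero (orderOf z * q) := ⟨(Nat.mul_pos (orderOf_pos z) Nat.card_pos).ne'⟩
  let c : C := Multiplicative.ofAdd 1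
  have hc : orderOf c = orderOf z * q := by
    rw [orderOf_ofAdd_eq_addOrderOf, ZMod.addOrderOf_one]
  have hcq : orderOf (c ^ q) = orderOf z := by
    rw [orderOf_pow_of_dvd Nat.card_pos.ne' (by rw [hc]; exact dvd_mul_left _ _), hc,
      Nat.mul_div_cancel _ Nat.card_pos]
  have hcentral : (z⁻¹, c ^ q) ∈ center (N × C) := by
    rw [Subgroup.center_prod]
    exact ⟨(center N).inv_mem hz, mem_center_iff.mpr fun _ => mul_comm _ _⟩
  have := normal_zpowers_of_mem_center hcentral
  have hinj := centralProductInl_injective (z := z) (w := c ^ q) hcq.symm.dvd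
  exact ⟨_, inferInstance, inferInstance, _, hinj, inferInstance,
    not_hasComplementIn_range_centralProductInl hz1 hinj⟩

/-- **Rose's theorem.** For a finite group `N`, the center of `N` is trivial and
`Inn(N)` has a complement in `Aut(N)` if and only if whenever `N` is embedded as a
normal subgroup of a finite group `G`, the image of `N` has a complement in `G`. -/
theorem rose (N : Type u) [Group N] [Finite N] :
    (Subgroup.center N = ⊥ ∧
      HasComplementIn (MulAut.conj : N →* MulAut N).range ⊤) ↔
    (∀ (G : Type u) [Group G] [Finite G] (f : N →* G),
      Function.Injective f → f.range.Normal → HasComplementIn f.range ⊤) := by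
  have hconj (hN : center N = ⊥) : Function.Injective (MulAut.conj : N →* MulAut N) :=
    (MonoidHom.ker_eq_bot_iff _).mp (MulAut.ker_conj N ▸ hN)
  constructor
  · rintro ⟨hN, hInn⟩ G _ _ f hf hfN
    obtain ⟨φ, hφ⟩ := exists_comp_eq_conj hf
    exact (hφ ▸ hInn).of_comp (hφ ▸ hconj hN)
  · intro hsplit
    have hN : center N = ⊥ := by
      by_contra hN
      obtain ⟨G, _, _, f, hf, hfN, hG⟩ := exists_not_hasComplementIn_of_center_ne_bot hN
      exact hG (hsplit G f hf hfN)
    exact ⟨hN, hsplit _ _ (hconj hN) (MulAut.normal_range_conj N)⟩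
end

section
/- Let N = N₁ × ⋯ × N_k be a finite group such that each direct factor N_i is a characteristic subgroup of N. If Gaschütz' theorem holds for each N_i, then Gaschütz' theorem holds for N. -/
open Pointwise

universe u

/-!
Inside `G`, write `N = A × B`; both factors are normal in `G` because they are characteristic
in `N ⊴ G`. Let `K` complement `N` in `H`. Modulo `B`, the group `N/B ≅ A` is complemented
by `KB/B` in `H/B`, so Gaschütz for `A` yields `L ≥ B` with `L ∩ N = B` and `LN = G`.
Inside `L`, the subgroup `KA ∩ L` complements `B` in `H ∩ L`, and `[L : H ∩ L] = [G : H]`,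
so Gaschütz for `B` yields a complement `D` of `B` in `L`; then `D` complements `N` in `G`.
For `k` factors, split off the first one and induct, keeping track of the normality of the
factors in the ambient group.
-/

namespace Subgroup

variable {G : Type*} [Group G]

theorem sup_inf_assoc_of_le_of_normal {A B C : Subgroup G} [A.Normal] (h : A ≤ C) :
    (A ⊔ B) ⊓ C = A ⊔ B ⊓ C :=
  SetLike.coe_injective <| by
    rw [coe_inf, normal_mul, normal_mul, mul_inf_assoc _ _ _ h]

theorem relIndex_eq_index_of_sup_eq_top {H L N : Subgroup G} [N.Normal] (hNH : N ≤ H)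
    (hLN : L ⊔ N = ⊤) : H.relIndex L = H.index := by
  set π := QuotientGroup.mk' N
  have hsurj : Function.Surjective (π.comp L.subtype) := by
    intro q
    obtain ⟨g, rfl⟩ := QuotientGroup.mk'_surjective N q
    have hg : g ∈ (L : Set G) * N := by rw [← mul_normal, hLN]; trivial
    obtain ⟨l, hl, n, hn, rfl⟩ := hg
    exact ⟨⟨l, hl⟩, QuotientGroup.eq.mpr (by simpa using hn)⟩
  have hcomap : (H.map π).comap (π.comp L.subtype) = H.subgroupOf L := by
    rw [← comap_comap, comap_map_eq, QuotientGroup.ker_mk', sup_eq_left.mpr hNH]; rfl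
  rw [relIndex, ← hcomap, index_comap_of_surjective _ hsurj,
    index_map_eq _ (QuotientGroup.mk'_surjective N) (by rwa [QuotientGroup.ker_mk'])]

theorem Characteristic.normal_map {T : Type*} [Group T] {S : Subgroup T} [hS : S.Characteristic]
    {f : T →* G} (hf : Function.Injective f) [f.range.Normal] : (S.map f).Normal := by
  refine ⟨?_⟩
  rintro _ ⟨s, hs, rfl⟩ g
  let e := MonoidHom.ofInjective hf
  let φ : T ≃* T := (e.trans (MulAut.conjNormal g)).trans e.symm
  refine ⟨φ s, characteristic_iff_le_comap.mp hS φ hs, ?_⟩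
  simp [φ, e, MonoidHom.ofInjective_apply]

theorem iSup_range_mulSingle {ι : Type*} [Finite ι] [DecidableEq ι] (N : ι → Type*)
    [∀ i, Group (N i)] : ⨆ i, (MonoidHom.mulSingle N i).range = ⊤ :=
  eq_top_iff.mpr fun x _ =>
    pi_mem_of_mulSingle_mem x fun i => mem_iSup_of_mem i ⟨x i, rfl⟩

end Subgroup

theorem MonoidHom.normal_range_codRestrict {G M : Type*} [Group G] [Group M] {g : M →* G}
    [g.range.Normal] {L : Subgroup G} (h : ∀ x, g x ∈ L) :
    (g.codRestrict L h).range.Normal := by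
  rw [← g.subgroupOf_range_eq_of_le fun _ ⟨x, hx⟩ => hx ▸ h x]
  infer_instance

section Complement

open Subgroup

variable {G G' : Type*} [Group G] [Group G']

theorem isComplementOfIn_iff {K N H : Subgroup G} [N.Normal] :
    IsComplementOfIn K N H ↔ K ⊓ N = ⊥ ∧ K ⊔ N = H := by
  rw [IsComplementOfIn, ← mul_normal, SetLike.coe_set_eq]
  constructor
  · exact fun ⟨_, h⟩ => h
  · rintro ⟨hinf, rfl⟩
    exact ⟨le_sup_left, hinf, rfl⟩

theorem IsComplementOfIn.map {K N H : Subgroup G} [hN : N.Normal] (h : IsComplementOfIn K N H)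
    {f : G →* G'} (hf : Function.Surjective f) (hker : f.ker ≤ N) :
    IsComplementOfIn (K.map f) (N.map f) (H.map f) := by
  have := hN.map f hf
  rw [isComplementOfIn_iff] at h ⊢
  refine ⟨comap_injective hf ?_, by rw [← Subgroup.map_sup, h.2]⟩
  rw [comap_inf, comap_map_eq, comap_map_eq, MonoidHom.comap_bot, sup_eq_left.mpr hker, sup_comm,
    sup_inf_assoc_of_le_of_normal hker, h.1, sup_bot_eq]

theorem IsComplementOfIn.comap_inf_eq_ker {L' : Subgroup G'} {N : Subgroup G} [hN : N.Normal]
    {f : G →* G'} (hf : Function.Surjective f) (hker : f.ker ≤ N)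
    (h : IsComplementOfIn L' (N.map f) ⊤) : L'.comap f ⊓ N = f.ker := by
  have := hN.map f hf
  rw [isComplementOfIn_iff] at h
  rw [← sup_eq_left.mpr hker, ← comap_map_eq, ← comap_inf, h.1, MonoidHom.comap_bot]

theorem IsComplementOfIn.comap_sup_eq_top {L' : Subgroup G'} {N : Subgroup G} [hN : N.Normal]
    {f : G →* G'} (hf : Function.Surjective f) (hker : f.ker ≤ N)
    (h : IsComplementOfIn L' (N.map f) ⊤) : L'.comap f ⊔ N = ⊤ := by
  have := hN.map f hf
  rw [isComplementOfIn_iff] at h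
  have hmap : (L'.comap f ⊔ N).map f = ⊤ := by
    rw [Subgroup.map_sup, map_comap_eq_self_of_surjective hf, h.2]
  rw [← sup_eq_left.mpr (hker.trans le_sup_right), ← comap_map_eq, hmap, comap_top]

theorem IsComplementOfIn.inf_of_sup {K A B H L : Subgroup G} [A.Normal] [B.Normal]
    (h : IsComplementOfIn K (A ⊔ B) H) (hAB : A ⊓ B = ⊥) (hBL : B ≤ L) :
    IsComplementOfIn ((K ⊔ A) ⊓ L) B (H ⊓ L) := by
  rw [isComplementOfIn_iff] at h ⊢
  have hA : (A ⊔ K) ⊓ (A ⊔ B) = A := by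
    rw [sup_inf_assoc_of_le_of_normal le_sup_left, h.1, sup_bot_eq]
  constructor
  · refine le_bot_iff.mp ?_
    calc (K ⊔ A) ⊓ L ⊓ B ≤ (A ⊔ K) ⊓ (A ⊔ B) ⊓ B :=
          le_inf (le_inf (inf_le_left.trans (inf_le_left.trans (sup_comm K A).le))
            (inf_le_right.trans le_sup_right)) inf_le_right
      _ = ⊥ := by rw [hA, hAB]
  · rw [sup_comm, ← sup_inf_assoc_of_le_of_normal hBL, ← h.2]
    congr 1
    ac_rfl

theorem IsComplementOfIn.of_inf_eq_of_sup_eq_top {D M L N : Subgroup G} [M.Normal] [N.Normal]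
    (h : IsComplementOfIn D M L) (hinf : L ⊓ N = M) (hsup : L ⊔ N = ⊤) :
    IsComplementOfIn D N ⊤ := by
  rw [isComplementOfIn_iff] at h ⊢
  have hDL : D ≤ L := h.2 ▸ le_sup_left
  constructor
  · rw [← inf_eq_left.mpr hDL, inf_assoc, hinf, h.1]
  · rw [← sup_eq_right.mpr (hinf ▸ inf_le_right : M ≤ N), ← sup_assoc, h.2, hsup]

theorem isComplementOfIn_subgroupOf_iff {K N H L : Subgroup G} [N.Normal] (hK : K ≤ L)
    (hN : N ≤ L) (hH : H ≤ L) :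
    IsComplementOfIn (K.subgroupOf L) (N.subgroupOf L) (H.subgroupOf L) ↔
      IsComplementOfIn K N H := by
  have hinf : K.subgroupOf L ⊓ N.subgroupOf L = (K ⊓ N).subgroupOf L := (comap_inf K N _).symm
  rw [isComplementOfIn_iff, isComplementOfIn_iff, hinf, ← subgroupOf_sup hK hN,
    ← bot_subgroupOf, subgroupOf_inj, subgroupOf_inj, inf_of_le_left (inf_le_left.trans hK),
    bot_inf_eq, inf_of_le_left (sup_le hK hN), inf_of_le_left hH]

theorem hasComplementIn_subgroupOf_iff {N H L : Subgroup G} [N.Normal] (hNH : N ≤ H)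
    (hHL : H ≤ L) :
    HasComplementIn (N.subgroupOf L) (H.subgroupOf L) ↔ HasComplementIn N H := by
  constructor
  · rintro ⟨K', hK'⟩
    have hK' : IsComplementOfIn ((K'.map L.subtype).subgroupOf L) (N.subgroupOf L)
        (H.subgroupOf L) := by
      rwa [← comap_map_eq_self_of_injective L.subtype_injective K'] at hK'
    exact ⟨_, (isComplementOfIn_subgroupOf_iff (map_subtype_le K') (hNH.trans hHL) hHL).mp hK'⟩
  · rintro ⟨K, hK⟩
    exact ⟨_, (isComplementOfIn_subgroupOf_iff (hK.1.trans hHL) (hNH.trans hHL) hHL).mpr hK⟩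

end Complement

def Subgroup.HasGaschuetzProperty {G : Type*} [Group G] (N : Subgroup G) : Prop :=
  ∀ H : Subgroup G, N ≤ H → Nat.Coprime (Nat.card N) H.index → HasComplementIn N H →
    HasComplementIn N ⊤

theorem Subgroup.hasGaschuetzProperty_bot {G : Type*} [Group G] :
    (⊥ : Subgroup G).HasGaschuetzProperty :=
  fun _ _ _ _ => ⟨⊤, isComplementOfIn_iff.mpr ⟨inf_bot_eq ⊤, sup_bot_eq ⊤⟩⟩

theorem gaschuetzHolds_iff {T : Type u} [Group T] :
    GaschuetzHolds T ↔ ∀ (G : Type u) [Group G] [Finite G] (f : T →* G),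
      Function.Injective f → f.range.Normal → f.range.HasGaschuetzProperty := by
  have hcard {G : Type u} [Group G] {f : T →* G} (hf : Function.Injective f) :
      Nat.card T = Nat.card f.range :=
    Nat.card_congr (MonoidHom.ofInjective hf).toEquiv
  constructor
  · intro h G _ _ f hf hn H hle hcop
    exact h G f H hf hn hle (by rwa [hcard hf])
  · intro h G _ _ f H hf hn hle hcop
    exact h G f hf hn H hle (by rwa [← hcard hf])

theorem GaschuetzHolds.of_mulEquiv {T T' : Type u} [Group T] [Group T'] (e : T ≃* T')
    (h : GaschuetzHolds T) : GaschuetzHolds T' := by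
  rw [gaschuetzHolds_iff] at h ⊢
  intro G _ _ f hf hn
  have hrange : (f.comp e.toMonoidHom).range = f.range := by
    rw [MonoidHom.range_comp, MonoidHom.range_eq_top.mpr e.surjective, ← MonoidHom.range_eq_map]
  have := h G (f.comp e.toMonoidHom) (hf.comp e.injective) (hrange ▸ hn)
  rwa [hrange] at this

namespace Subgroup

variable {G : Type u} [Group G]

theorem HasGaschuetzProperty.sup [Finite G] {A B : Subgroup G} [A.Normal] [B.Normal]
    (hAB : A ⊓ B = ⊥) (hA : GaschuetzHolds A)
    (hB : ∀ L : Subgroup G, B ≤ L → (B.subgroupOf L).HasGaschuetzProperty) :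
    (A ⊔ B).HasGaschuetzProperty := by
  intro H hH hcop ⟨K, hK⟩
  set π := QuotientGroup.mk' B
  have hπ : Function.Surjective π := QuotientGroup.mk'_surjective B
  have hker : π.ker ≤ A ⊔ B := (QuotientGroup.ker_mk' B).le.trans le_sup_right
  have hrange : (π.comp A.subtype).range = (A ⊔ B).map π := by
    rw [MonoidHom.range_comp, range_subtype, Subgroup.map_sup,
      (map_eq_bot_iff B).mpr (QuotientGroup.ker_mk' B).ge, sup_bot_eq]
  have hinj : Function.Injective (π.comp A.subtype) := by
    rw [← MonoidHom.ker_eq_bot_iff, ← MonoidHom.comap_ker, QuotientGroup.ker_mk', comap_subtype,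
      subgroupOf_eq_bot, disjoint_iff, inf_comm, hAB]
  have hnormal : ((A ⊔ B).map π).Normal := Normal.map inferInstance π hπ
  obtain ⟨L', hL'⟩ : HasComplementIn ((A ⊔ B).map π) ⊤ := by
    have hAπ := gaschuetzHolds_iff.mp hA (G ⧸ B) _ hinj (hrange ▸ hnormal)
    rw [hrange] at hAπ
    refine hAπ (H.map π) (map_mono hH) ?_ ⟨_, hK.map hπ hker⟩
    rw [index_map_eq _ hπ (hker.trans hH)]
    exact Nat.Coprime.coprime_dvd_left (card_map_dvd (A ⊔ B) π) hcop
  have hLinf := hL'.comap_inf_eq_ker hπ hker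
  have hLsup := hL'.comap_sup_eq_top hπ hker
  rw [QuotientGroup.ker_mk'] at hLinf
  set L := L'.comap π
  have hBL : B ≤ L := hLinf ▸ inf_le_left
  obtain ⟨D, hD⟩ : HasComplementIn B L := by
    rw [← hasComplementIn_subgroupOf_iff hBL le_rfl, subgroupOf_self]
    refine hB L hBL (H.subgroupOf L) (comap_mono (le_sup_right.trans hH)) ?_ ?_
    · rw [Nat.card_congr (subgroupOfEquivOfLe hBL).toEquiv, ← relIndex,
        relIndex_eq_index_of_sup_eq_top hH hLsup]
      exact Nat.Coprime.coprime_dvd_left (card_dvd_of_le le_sup_right) hcop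
    · rw [← inf_subgroupOf_right H L,
        hasComplementIn_subgroupOf_iff (le_inf (le_sup_right.trans hH) hBL) inf_le_right]
      exact ⟨_, hK.inf_of_sup hAB hBL⟩
  exact ⟨D, hD.of_inf_eq_of_sup_eq_top hLinf hLsup⟩

end Subgroup

namespace MonoidHom

variable {k : ℕ} (N : Fin (k + 1) → Type*) [∀ i, Group (N i)]

def finConsOne : (∀ j : Fin k, N j.succ) →* ∀ i, N i where
  toFun := Fin.cons 1
  map_one' := Fin.cons_self_tail 1
  map_mul' x y := by
    ext i
    cases i using Fin.cases <;> simp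

@[simp]
theorem finConsOne_apply (t : ∀ j : Fin k, N j.succ) : finConsOne N t = Fin.cons 1 t :=
  rfl

theorem finConsOne_injective : Function.Injective (finConsOne N) :=
  Fin.cons_right_injective 1

theorem finConsOne_comp_mulSingle (j : Fin k) :
    (finConsOne N).comp (MonoidHom.mulSingle _ j) = MonoidHom.mulSingle N j.succ := by
  ext a i
  cases i using Fin.cases with
  | zero => simp
  | succ i =>
    rcases eq_or_ne i j with rfl | h
    · simp
    · simp [h]

theorem range_mulSingle_zero_inf_range_finConsOne :
    (MonoidHom.mulSingle N 0).range ⊓ (finConsOne N).range = ⊥ := by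
  rw [eq_bot_iff]
  rintro _ ⟨⟨a, rfl⟩, t, ht⟩
  have : a = 1 := by simpa using (congrFun ht 0).symm
  simp [this]

theorem range_mulSingle_zero_sup_range_finConsOne :
    (MonoidHom.mulSingle N 0).range ⊔ (finConsOne N).range = ⊤ := by
  refine eq_top_iff.mpr fun x _ => ?_
  have hx : Pi.mulSingle 0 (x 0) * finConsOne N (Fin.tail x) = x := by
    ext i
    cases i using Fin.cases <;> simp [Fin.tail]
  exact hx ▸ mul_mem (Subgroup.mem_sup_left ⟨x 0, rfl⟩) (Subgroup.mem_sup_right ⟨_, rfl⟩)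

theorem range_finConsOne :
    (finConsOne N).range = ⨆ j : Fin k, (MonoidHom.mulSingle N j.succ).range := by
  rw [range_eq_map, ← Subgroup.iSup_range_mulSingle, Subgroup.map_iSup]
  simp_rw [← range_comp, finConsOne_comp_mulSingle]

variable {N} {G : Type*} [Group G] (f : (∀ i, N i) →* G)

theorem range_eq_sup_range_comp_finConsOne :
    f.range = (f.comp (mulSingle N 0)).range ⊔ (f.comp (finConsOne N)).range := by
  rw [range_comp, range_comp, ← Subgroup.map_sup, range_mulSingle_zero_sup_range_finConsOne,
    ← range_eq_map]

theorem range_comp_mulSingle_zero_inf_range_comp_finConsOne (hf : Function.Injective f) :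
    (f.comp (mulSingle N 0)).range ⊓ (f.comp (finConsOne N)).range = ⊥ := by
  rw [range_comp, range_comp, ← Subgroup.map_inf_eq _ _ _ hf,
    range_mulSingle_zero_inf_range_finConsOne, Subgroup.map_bot]

theorem normal_range_comp_finConsOne (hnormal : ∀ i, (f.comp (mulSingle N i)).range.Normal) :
    (f.comp (finConsOne N)).range.Normal := by
  rw [range_comp, range_finConsOne, Subgroup.map_iSup]
  simp_rw [← range_comp]
  exact Subgroup.iSup_normal _

end MonoidHom

open Subgroup MonoidHom in
theorem hasGaschuetzProperty_range_pi {k : ℕ} {N : Fin k → Type u} [∀ i, Group (N i)]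
    (hN : ∀ i, GaschuetzHolds (N i)) {G : Type u} [Group G] [Finite G] (f : (∀ i, N i) →* G)
    (hf : Function.Injective f) (hnormal : ∀ i, (f.comp (mulSingle N i)).range.Normal) :
    f.range.HasGaschuetzProperty := by
  induction k generalizing G with
  | zero =>
    have : f.range = ⊥ := eq_bot_iff.mpr <| by
      rintro _ ⟨x, rfl⟩
      rw [Subsingleton.elim x 1, map_one]
      exact one_mem _
    exact this ▸ hasGaschuetzProperty_bot
  | succ k ih =>
    set T := finConsOne N
    have := hnormal 0
    have := normal_range_comp_finConsOne f hnormal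
    have hA := (hN 0).of_mulEquiv
      (ofInjective (f := f.comp (mulSingle N 0)) (hf.comp (Pi.mulSingle_injective 0)))
    rw [range_eq_sup_range_comp_finConsOne]
    refine HasGaschuetzProperty.sup (range_comp_mulSingle_zero_inf_range_comp_finConsOne f hf) hA
      fun L hL => ?_
    let g := (f.comp T).codRestrict L fun x => hL ⟨x, rfl⟩
    have hg : Function.Injective g := fun x y hxy =>
      (hf.comp (finConsOne_injective N)) (congrArg Subtype.val hxy)
    have hgnormal (j : Fin k) : (g.comp (mulSingle _ j)).range.Normal := by
      have : ((f.comp T).comp (mulSingle _ j)).range.Normal := by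
        rw [comp_assoc, finConsOne_comp_mulSingle]
        exact hnormal j.succ
      exact normal_range_codRestrict (g := (f.comp T).comp (mulSingle _ j)) _
    have := ih (fun j => hN j.succ) g hg hgnormal
    rwa [← subgroupOf_range_eq_of_le] at this

theorem gaschuetzHolds_pi_general {k : ℕ} (N : Fin k → Type u)
    [∀ i, Group (N i)]
    (hchar : ∀ i, ((MonoidHom.mulSingle N i).range :
      Subgroup (∀ j, N j)).Characteristic)
    (hG : ∀ i, GaschuetzHolds (N i)) :
    GaschuetzHolds (∀ i, N i) := by
  rw [gaschuetzHolds_iff]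
  intro G _ _ f hf _
  refine hasGaschuetzProperty_range_pi hG f hf fun i => ?_
  rw [MonoidHom.range_comp]
  exact (hchar i).normal_map hf

/-- If `N = N₁ × ⋯ × N_k` where each direct factor `Nᵢ` is characteristic in `N`, and
Gaschütz' theorem holds for each `Nᵢ`, then Gaschütz' theorem holds for `N`. -/
theorem gaschuetzHolds_pi {k : ℕ} (N : Fin k → Type u)
    [∀ i, Group (N i)] [∀ i, Finite (N i)]
    (hchar : ∀ i, ((MonoidHom.mulSingle N i).range :
      Subgroup (∀ j, N j)).Characteristic)
    (hG : ∀ i, GaschuetzHolds (N i)) :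
    GaschuetzHolds (∀ i, N i) :=
  gaschuetzHolds_pi_general N hchar hG
end

section
/- Let N be a finite group with a characteristic subgroup M such that M satisfies Rose's criterion (i.e., Z(M) = 1 and Inn(M) has a complement in Aut(M)) and such that Gaschütz' theorem holds for the quotient N/M. Then Gaschütz' theorem holds for N. -/
open Pointwise

universe u

/-- `N` satisfies Rose's criterion: trivial center and `Inn(N)` has a complement
in `Aut(N)`. -/
def RoseCriterion (M : Type u) [Group M] : Prop :=
  Subgroup.center M = ⊥ ∧ HasComplementIn (MulAut.conj : M →* MulAut M).range ⊤

/-- If `M` is a characteristic subgroup of the finite group `N` satisfying Rose's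
criterion, and Gaschütz' theorem holds for `N/M`, then Gaschütz' theorem holds
for `N`. -/
theorem gaschuetzHolds_of_characteristic_rose (N : Type u) [Group N] [Finite N]
    (M : Subgroup N) [M.Characteristic]
    (hrose : RoseCriterion M)
    (hquot : GaschuetzHolds (N ⧸ M)) :
    GaschuetzHolds N := by
  obtain ⟨hZ, A, -, hAinn, hAprod⟩ := hrose
  intro G _ _ f H hf hnorm hle hcop hcomp
  obtain ⟨K, hKH, hKN, hKprod⟩ := hcomp
  set M' : Subgroup G := M.map f with hM'def
  have hM'range : M' ≤ f.range := M.map_le_range f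
  have hM'H : M' ≤ H := hM'range.trans hle
  -- `M'` is normal in `G`, since `M` is characteristic in `N` and `f.range` is normal.
  haveI hM'normal : M'.Normal := by
    constructor
    intro x hx g
    obtain ⟨m, hm, rfl⟩ := hx
    let eN : N ≃* f.range := MonoidHom.ofInjective hf
    let α : N ≃* N := eN.trans ((MulAut.conjNormal g : MulAut f.range).trans eN.symm)
    have hα : ∀ n : N, f (α n) = g * f n * g⁻¹ := by
      intro n
      have h1 : f (α n) = ↑(eN (α n)) := (MonoidHom.ofInjective_apply hf).symm
      rw [h1]
      show (↑(eN (eN.symm (MulAut.conjNormal g (eN n)))) : G) = g * f n * g⁻¹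
      rw [MulEquiv.apply_symm_apply, MulAut.conjNormal_apply, MonoidHom.ofInjective_apply hf]
    have hfix : M.comap α.toMonoidHom = M := ‹M.Characteristic›.fixed α
    have hm' : α m ∈ M := by
      have hm2 : m ∈ M.comap α.toMonoidHom := by rw [hfix]; exact hm
      exact Subgroup.mem_comap.mp hm2
    exact ⟨α m, hm', hα m⟩
  -- Pass to the quotient `G ⧸ M'`.
  set mk : G →* G ⧸ M' := QuotientGroup.mk' M' with hmkdef
  have hmk_surj : Function.Surjective mk := QuotientGroup.mk'_surjective M'
  have hcomapM : M ≤ M'.comap f := fun m hm => ⟨m, hm, rfl⟩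
  set fbar : N ⧸ M →* G ⧸ M' := QuotientGroup.map M M' f hcomapM with hfbardef
  have hfbar_mk : ∀ n : N, fbar (QuotientGroup.mk n) = mk (f n) := fun n => rfl
  have hfbar_inj : Function.Injective fbar := by
    rw [injective_iff_map_eq_one]
    intro x hx
    obtain ⟨n, rfl⟩ := QuotientGroup.mk'_surjective M x
    have h1 : mk (f n) = 1 := by rw [← hfbar_mk n]; exact hx
    have h2 : f n ∈ M' := (QuotientGroup.eq_one_iff _).mp h1
    obtain ⟨m, hm, hfm⟩ := h2
    have : m = n := hf hfm
    subst this
    exact (QuotientGroup.eq_one_iff _).mpr hm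
  have hrange : fbar.range = f.range.map mk := by
    ext q
    constructor
    · rintro ⟨x, rfl⟩
      obtain ⟨n, rfl⟩ := QuotientGroup.mk'_surjective M x
      exact ⟨f n, ⟨n, rfl⟩, (hfbar_mk n).symm⟩
    · rintro ⟨y, ⟨n, rfl⟩, rfl⟩
      exact ⟨QuotientGroup.mk n, hfbar_mk n⟩
  have hnorm' : fbar.range.Normal := by
    rw [hrange]; exact hnorm.map mk hmk_surj
  have hle' : fbar.range ≤ H.map mk := by
    rw [hrange]; exact Subgroup.map_mono hle
  have hcard_dvd : Nat.card (N ⧸ M) ∣ Nat.card N :=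
    ⟨Nat.card M, Subgroup.card_eq_card_quotient_mul_card_subgroup M⟩
  have hcop' : Nat.Coprime (Nat.card (N ⧸ M)) (H.map mk).index := by
    rw [Subgroup.index_map_eq H hmk_surj (by rw [hmkdef, QuotientGroup.ker_mk']; exact hM'H)]
    exact Nat.Coprime.coprime_dvd_left hcard_dvd hcop
  have hcomp' : HasComplementIn fbar.range (H.map mk) := by
    refine ⟨K.map mk, Subgroup.map_mono hKH, ?_, ?_⟩
    · rw [hrange, eq_bot_iff]
      intro x hx
      rw [Subgroup.mem_inf] at hx
      obtain ⟨⟨k, hk, rfl⟩, n, hn, hne⟩ := hx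
      rw [hmkdef, QuotientGroup.mk'_eq_mk'] at hne
      obtain ⟨z, hz, rfl⟩ := hne
      have hkr : n * z ∈ f.range := f.range.mul_mem hn (hM'range hz)
      have : n * z ∈ K ⊓ f.range := ⟨hk, hkr⟩
      rw [hKN, Subgroup.mem_bot] at this
      rw [this, Subgroup.mem_bot, map_one]
    · rw [hrange, Subgroup.coe_map, Subgroup.coe_map, Subgroup.coe_map,
        ← Set.image_mul, hKprod]
  obtain ⟨Qb, -, hQbN, hQbprod⟩ :=
    hquot (G ⧸ M') fbar (H.map mk) hfbar_inj hnorm' hle' hcop' hcomp'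
  set Q : Subgroup G := Qb.comap mk with hQdef
  have hM'Q : M' ≤ Q := by
    intro x hx
    show mk x ∈ Qb
    have h1 : mk x = 1 := (QuotientGroup.eq_one_iff x).mpr hx
    rw [h1]; exact Qb.one_mem
  have hQN : ∀ x, x ∈ Q → x ∈ f.range → x ∈ M' := by
    intro x hxQ hxN
    have h1 : mk x ∈ Qb ⊓ fbar.range := ⟨hxQ, by rw [hrange]; exact ⟨x, hxN, rfl⟩⟩
    rw [hQbN, Subgroup.mem_bot] at h1
    exact (QuotientGroup.eq_one_iff x).mp h1
  have hQprod : ∀ g : G, ∃ q ∈ Q, ∃ n ∈ f.range, q * n = g := by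
    intro g
    have h1 : mk g ∈ ((Qb : Set (G ⧸ M')) * (fbar.range : Set (G ⧸ M'))) := by
      rw [hQbprod]; exact Subgroup.mem_top (mk g)
    obtain ⟨q, hq, y, hy, hqy⟩ := h1
    rw [SetLike.mem_coe, hrange] at hy
    obtain ⟨n, hn, rfl⟩ := hy
    refine ⟨g * n⁻¹, ?_, n, hn, by group⟩
    show mk (g * n⁻¹) ∈ Qb
    have h2 : mk (g * n⁻¹) = q := by
      rw [map_mul, map_inv, ← hqy, mul_inv_cancel_right]
    rw [h2]; exact hq
  -- Rose's criterion yields a complement `L` of `M'` in `G`.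
  set e : ↥M ≃* ↥M' := M.equivMapOfInjective f hf with hedef
  set φ : G →* MulAut ↥M :=
    ((MulAut.congr e).symm.toMonoidHom).comp MulAut.conjNormal with hφdef
  have hecoe : ∀ m : ↥M, (e m : G) = f m := fun m =>
    M.coe_equivMapOfInjective_apply f hf m
  have hesymm : ∀ y : ↥M', f (e.symm y) = (y : G) := by
    intro y
    rw [← hecoe (e.symm y), MulEquiv.apply_symm_apply]
  have hφf : ∀ m : ↥M, φ ((f m : G)) = MulAut.conj m := by
    intro m
    ext x
    refine hf ?_
    show f ((φ (f m)) x : N) = f ((MulAut.conj m) x : N)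
    have h1 : (φ (f m)) x = e.symm (MulAut.conjNormal (G := G) (f m) (e x)) := rfl
    rw [h1, hesymm, MulAut.conjNormal_apply, hecoe, MulAut.conj_apply]
    push_cast
    rw [map_mul, map_mul, map_inv]
  set L : Subgroup G := A.comap φ with hLdef
  have hLM : ∀ x, x ∈ L → x ∈ M' → x = 1 := by
    intro x hxL hxM
    obtain ⟨m, hm, rfl⟩ := hxM
    have hxA : MulAut.conj (⟨m, hm⟩ : ↥M) ∈ A := by
      rw [← hφf ⟨m, hm⟩]; exact hxL
    have h1 : MulAut.conj (⟨m, hm⟩ : ↥M) = 1 := by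
      have h2 : MulAut.conj (⟨m, hm⟩ : ↥M)
          ∈ A ⊓ (MulAut.conj : ↥M →* MulAut ↥M).range := ⟨hxA, ⟨_, rfl⟩⟩
      rwa [hAinn, Subgroup.mem_bot] at h2
    have h2 : (⟨m, hm⟩ : ↥M) ∈ Subgroup.center ↥M := by
      rw [Subgroup.mem_center_iff]
      intro y
      have h3 : MulAut.conj (⟨m, hm⟩ : ↥M) y = y := by rw [h1]; rfl
      rw [MulAut.conj_apply] at h3
      calc y * (⟨m, hm⟩ : ↥M) = (⟨m, hm⟩ : ↥M) * y * (⟨m, hm⟩ : ↥M)⁻¹ * (⟨m, hm⟩ : ↥M) := by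
            rw [h3]
        _ = (⟨m, hm⟩ : ↥M) * y := by group
    rw [hZ, Subgroup.mem_bot] at h2
    have : m = 1 := Subtype.ext_iff.mp h2
    rw [this, map_one]
  have hLMprod : ∀ g : G, ∃ l ∈ L, ∃ x ∈ M', l * x = g := by
    intro g
    have h1 : φ g ∈ ((A : Set (MulAut ↥M))
        * ((MulAut.conj : ↥M →* MulAut ↥M).range : Set (MulAut ↥M))) := by
      rw [hAprod]; exact Subgroup.mem_top (φ g)
    obtain ⟨a, ha, i, hi, hai⟩ := h1
    rw [SetLike.mem_coe, MonoidHom.mem_range] at hi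
    obtain ⟨m, rfl⟩ := hi
    refine ⟨g * (f ↑m)⁻¹, ?_, f ↑m, ⟨↑m, m.2, rfl⟩, by group⟩
    show φ (g * (f ↑m)⁻¹) ∈ A
    rw [map_mul, map_inv, hφf m, ← hai, mul_inv_cancel_right]
    exact ha
  -- The complement of `f.range` in `G` is `Q ⊓ L`.
  refine ⟨Q ⊓ L, le_top, ?_, ?_⟩
  · rw [eq_bot_iff]
    intro x hx
    rw [Subgroup.mem_inf, Subgroup.mem_inf] at hx
    obtain ⟨⟨hxQ, hxL⟩, hxN⟩ := hx
    rw [Subgroup.mem_bot]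
    exact hLM x hxL (hQN x hxQ hxN)
  · ext g
    simp only [Subgroup.coe_top, Set.mem_univ, iff_true]
    obtain ⟨q, hq, n, hn, rfl⟩ := hQprod g
    obtain ⟨l, hl, x, hx, rfl⟩ := hLMprod q
    have hlQ : l ∈ Q := by
      have h1 : l = (l * x) * x⁻¹ := by group
      rw [h1]
      exact Q.mul_mem hq (Q.inv_mem (hM'Q hx))
    refine Set.mem_mul.mpr ⟨l, ?_, x * n, ?_, by group⟩
    · exact Subgroup.mem_inf.mpr ⟨hlQ, hl⟩
    · exact f.range.mul_mem (hM'range hx) hn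
end

section
/- (Yonaha) Let G be a finite metabelian group (i.e., the commutator subgroup G' is abelian) with Z(G) ∩ G' = 1. Then the commutator subgroup G' has a complement in G, and any two complements of G' in G are conjugate in G. -/
open Pointwise

/-!
Let `A = G'`, on which `G` acts by conjugation, `ρ g a = g a g⁻¹`. A complement `K` of `A` is the
kernel of a unique crossed homomorphism `f : G → A` restricting to the identity on `A` (`f g` is the
`A`-component of `g ∈ A K`), and two such `f` give complements conjugate under `A` as soon as they
differ by a principal crossed homomorphism `g ↦ ρ g b - b`.

Since `G/A` is abelian, the operators `ρ g` commute, so they generate a finite commutative subring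
`T` of `End A`. Every maximal ideal of the Artinian ring `T` is the annihilator of a nonzero
element, and `Z(G) ∩ A = 1` says that the `ρ g` have no common nonzero fixed point; hence the ideal
of `T` spanned by the `1 - ρ g` is all of `T`. Writing `1 = ∑ tᵢ (1 - ρ gᵢ)`, the crossed
homomorphism `∑ tᵢ ∘ ⁅·, gᵢ⁆` restricts to the identity on `A`, and for a crossed homomorphism `d`
vanishing on `A` the identity `(1 - ρ h) (d g) = (1 - ρ g) (d h)` makes `d = ∑ tᵢ (1 - ρ gᵢ) ∘ d`
principal.
-/

open scoped IsMulCommutative commutatorElement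

theorem Ideal.exists_ne_zero_forall_mul_eq_zero {R : Type*} [CommRing R] [IsArtinianRing R]
    {J : Ideal R} (hJ : J ≠ ⊤) : ∃ x : R, x ≠ 0 ∧ ∀ j ∈ J, j * x = 0 := by
  obtain ⟨m, hm, hJm⟩ := J.exists_le_maximal hJ
  have hass : m ∈ associatedPrimes R R := by
    refine Module.associatedPrimes.minimalPrimes_annihilator_subset_associatedPrimes R R ?_
    rw [Module.annihilator_eq_bot.mpr inferInstance]
    exact IsArtinianRing.mem_minimalPrimes bot_le
  obtain ⟨-, x, hx⟩ := isAssociatedPrime_iff.1 hass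
  refine ⟨x, ?_, fun j hj => ?_⟩
  · rintro rfl
    exact hm.ne_top (hx.trans Submodule.colon_singleton_zero)
  · have := hJm hj
    rw [hx, Submodule.mem_colon_singleton] at this
    simpa using this

section CrossedHom

variable {G M : Type*} [Group G] [AddCommGroup M] (ρ : Representation ℤ G M)

def IsCrossedHom (f : G → M) : Prop :=
  ∀ g h, f (g * h) = ρ g (f h) + f g

theorem isCrossedHom_zero : IsCrossedHom ρ (0 : G → M) := fun g h => by simp

variable {ρ}

namespace IsCrossedHom

variable {f f' : G → M}

theorem map_one (hf : IsCrossedHom ρ f) : f 1 = 0 := by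
  simpa using hf 1 1

theorem apply_map_inv (hf : IsCrossedHom ρ f) (g : G) : ρ g (f g⁻¹) = -f g := by
  rw [eq_neg_iff_add_eq_zero, ← hf, mul_inv_cancel, hf.map_one]

theorem add (hf : IsCrossedHom ρ f) (hf' : IsCrossedHom ρ f') : IsCrossedHom ρ (f + f') :=
  fun g h => by simp only [Pi.add_apply, hf g h, hf' g h, map_add]; abel

theorem sub (hf : IsCrossedHom ρ f) (hf' : IsCrossedHom ρ f') : IsCrossedHom ρ (f - f') :=
  fun g h => by simp only [Pi.sub_apply, hf g h, hf' g h, map_sub]; abel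

theorem comp {t : Module.End ℤ M} (ht : ∀ g, Commute t (ρ g)) (hf : IsCrossedHom ρ f) :
    IsCrossedHom ρ (t ∘ f) := fun g h => by
  simp only [Function.comp_apply, hf g h, map_add, ← Module.End.mul_apply, (ht g).eq]

def ker (hf : IsCrossedHom ρ f) : Subgroup G where
  carrier := {g | f g = 0}
  one_mem' := hf.map_one
  mul_mem' {g h} hg hh := by simp_all [hf g h]
  inv_mem' {g} hg := by
    have := congrArg (ρ g⁻¹) (hf.apply_map_inv g)
    simp_all [← Module.End.mul_apply, ← map_mul]

end IsCrossedHom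

end CrossedHom

section CommutingRepresentation

variable {G M : Type*} [Group G] [AddCommGroup M] [Finite M] (ρ : Representation ℤ G M)

/-- Equivalently: over the commutative ring generated by the `ρ g`, the elements `1 - ρ g` span
the unit ideal. -/
theorem Representation.one_induction
    (hcomm : ∀ g h, Commute (ρ g) (ρ h)) (hfix : ∀ m, (∀ g, ρ g m = m) → m = 0)
    {P : Module.End ℤ M → Prop} (zero : P 0) (add : ∀ t u, P t → P u → P (t + u))
    (mul : ∀ s t, (∀ g, Commute s (ρ g)) → P t → P (s * t)) (one_sub : ∀ g, P (1 - ρ g)) :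
    P 1 := by
  let T := Subring.closure (Set.range ρ)
  have : IsMulCommutative T := Subring.isMulCommutative_closure <| by
    rintro _ ⟨g, rfl⟩ _ ⟨h, rfl⟩
    exact hcomm g h
  have : Finite (Module.End ℤ M) := Finite.of_injective _ DFunLike.coe_injective
  let r (g : G) : T := ⟨ρ g, Subring.subset_closure ⟨g, rfl⟩⟩
  have hJ : Ideal.span (Set.range fun g => 1 - r g) = ⊤ := by
    by_contra hJ
    obtain ⟨x, hx0, hx⟩ := Ideal.exists_ne_zero_forall_mul_eq_zero hJ
    refine hx0 (Subtype.ext (LinearMap.ext fun m => hfix _ fun g => ?_))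
    have := congrArg (fun y : T => (y : Module.End ℤ M) m) (hx _ (Ideal.subset_span ⟨g, rfl⟩))
    exact (sub_eq_zero.mp (by simpa [r, sub_mul] using this)).symm
  have h1 : (1 : T) ∈ Ideal.span (Set.range fun g => 1 - r g) := hJ ▸ Submodule.mem_top
  refine Submodule.span_induction (p := fun (t : T) _ => P t) ?_ zero (fun t u _ _ => add t u)
    (fun (s : T) t _ => mul s t fun g => congrArg Subtype.val (mul_comm s (r g))) h1
  rintro _ ⟨g, rfl⟩
  exact one_sub g

end CommutingRepresentation

section Conjugation

variable {G : Type*} [Group G] (A : Subgroup G) [A.Normal] [IsMulCommutative A]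

def conjRep : Representation ℤ G (Additive A) :=
  (Representation.ofMulDistribMulAction (ConjAct G) A).comp ConjAct.toConjAct.toMonoidHom

@[simp]
theorem coe_toMul_conjRep_apply (g : G) (a : Additive A) :
    ((conjRep A g a).toMul : G) = g * a.toMul * g⁻¹ :=
  rfl

variable {A}

theorem conjRep_eq_one_of_mem {a : G} (ha : a ∈ A) : conjRep A a = 1 := by
  refine LinearMap.ext fun b => Additive.toMul.injective <| Subtype.ext ?_
  simpa [mul_inv_eq_iff_eq_mul] using setLike_mul_comm ha b.toMul.2

theorem conjRep_commute (hA : commutator G ≤ A) (g h : G) :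
    Commute (conjRep A g) (conjRep A h) := by
  have hgh : g * h = h * g * ⁅g⁻¹, h⁻¹⁆ := by group
  rw [Commute, SemiconjBy, ← map_mul, ← map_mul, hgh, map_mul _ (h * g),
    conjRep_eq_one_of_mem (Subgroup.commutator_le.mp hA _ trivial _ trivial), mul_one]

theorem eq_zero_of_forall_conjRep_apply_eq (hz : Subgroup.center G ⊓ A = ⊥) {m : Additive A}
    (hm : ∀ g, conjRep A g m = m) : m = 0 := by
  have hcenter : (m.toMul : G) ∈ Subgroup.center G ⊓ A := by
    refine ⟨Subgroup.mem_center_iff.mpr fun g => ?_, m.toMul.2⟩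
    have := congrArg (fun m : Additive A => (m.toMul : G)) (hm g)
    simp only [coe_toMul_conjRep_apply] at this
    exact mul_inv_eq_iff_eq_mul.mp this
  rw [hz, Subgroup.mem_bot] at hcenter
  exact Additive.toMul.injective (Subtype.ext hcenter)

end Conjugation

section Complements

variable {G : Type*} [Group G] {A : Subgroup G} [A.Normal] [IsMulCommutative A]

theorem isCrossedHom_commutator (hA : commutator G ≤ A) (b : G) :
    IsCrossedHom (conjRep A) fun g =>
      Additive.ofMul (⟨⁅g, b⁆, Subgroup.commutator_le.mp hA _ trivial _ trivial⟩ : A) := by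
  intro g h
  refine Additive.toMul.injective <| Subtype.ext ?_
  simp only [commutatorElement_def, toMul_ofMul, toMul_add, Subgroup.coe_mul,
    coe_toMul_conjRep_apply]
  group

theorem exists_isCrossedHom_eq_ofMul [Finite A] (hA : commutator G ≤ A)
    (hz : Subgroup.center G ⊓ A = ⊥) :
    ∃ f : G → Additive A, IsCrossedHom (conjRep A) f ∧ ∀ a : A, f a = Additive.ofMul a := by
  refine (conjRep A).one_induction (conjRep_commute hA)
    (fun _ => eq_zero_of_forall_conjRep_apply_eq hz)
    (P := fun t => ∃ f : G → Additive A, IsCrossedHom (conjRep A) f ∧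
      ∀ a : A, f a = t (Additive.ofMul a)) ?_ ?_ ?_ ?_
  · exact ⟨0, isCrossedHom_zero _, fun a => rfl⟩
  · rintro t u ⟨f, hf, hft⟩ ⟨f', hf', hfu⟩
    exact ⟨f + f', hf.add hf', fun a => by simp [hft, hfu]⟩
  · rintro s t hs ⟨f, hf, hft⟩
    exact ⟨s ∘ f, hf.comp hs, fun a => by simp [hft]⟩
  · intro b
    refine ⟨_, isCrossedHom_commutator hA b, fun a => Additive.toMul.injective <| Subtype.ext ?_⟩
    simp only [commutatorElement_def, toMul_ofMul, LinearMap.sub_apply, Module.End.one_apply,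
      toMul_sub, div_eq_mul_inv, Subgroup.coe_mul, InvMemClass.coe_inv, coe_toMul_conjRep_apply]
    group

theorem IsCrossedHom.map_mul_comm (hA : commutator G ≤ A) {d : G → Additive A}
    (hd : IsCrossedHom (conjRep A) d) (hdA : ∀ a ∈ A, d a = 0) (g h : G) :
    d (g * h) = d (h * g) := by
  have hgh : g * h = h * g * ⁅g⁻¹, h⁻¹⁆ := by group
  rw [hgh, hd, hdA _ (Subgroup.commutator_le.mp hA _ trivial _ trivial), map_zero, zero_add]

theorem IsCrossedHom.exists_eq_coboundary [Finite A] (hA : commutator G ≤ A)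
    (hz : Subgroup.center G ⊓ A = ⊥) {d : G → Additive A} (hd : IsCrossedHom (conjRep A) d)
    (hdA : ∀ a ∈ A, d a = 0) : ∃ b, ∀ g, d g = conjRep A g b - b := by
  refine (conjRep A).one_induction (conjRep_commute hA)
    (fun _ => eq_zero_of_forall_conjRep_apply_eq hz)
    (P := fun t => ∃ b, ∀ g, t (d g) = conjRep A g b - b) ?_ ?_ ?_ ?_
  · exact ⟨0, by simp⟩
  · rintro t u ⟨b, hb⟩ ⟨c, hc⟩
    exact ⟨b + c, fun g => by simp only [LinearMap.add_apply, hb, hc, map_add]; abel⟩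
  · rintro s t hs ⟨b, hb⟩
    refine ⟨s b, fun g => ?_⟩
    rw [Module.End.mul_apply, hb, map_sub, ← Module.End.mul_apply, (hs g).eq,
      Module.End.mul_apply]
  · intro h
    refine ⟨-d h, fun g => ?_⟩
    have hswap := hd.map_mul_comm hA hdA g h
    rw [hd, hd] at hswap
    have : conjRep A h (d g) = conjRep A g (d h) + d g - d h := eq_sub_of_add_eq hswap.symm
    simp only [LinearMap.sub_apply, Module.End.one_apply, this, map_neg]
    abel

theorem IsCrossedHom.isComplementOfIn_ker {f : G → Additive A} (hf : IsCrossedHom (conjRep A) f)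
    (hfA : ∀ a : A, f a = Additive.ofMul a) : IsComplementOfIn hf.ker A ⊤ := by
  refine ⟨le_top, eq_bot_iff.mpr fun g ⟨hgK, hgA⟩ => ?_, ?_⟩
  · have : Additive.ofMul (⟨g, hgA⟩ : A) = Additive.ofMul 1 := (hfA ⟨g, hgA⟩).symm.trans hgK
    exact congrArg Subtype.val (Additive.ofMul.injective this)
  · rw [Subgroup.coe_top, Set.eq_univ_iff_forall]
    intro g
    set a : A := (conjRep A g⁻¹ (f g)).toMul with ha
    refine Set.mem_mul.mpr ⟨g * (a : G)⁻¹, ?_, a, a.2, by group⟩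
    show f (g * (a : G)⁻¹) = 0
    rw [hf, ← Subgroup.coe_inv, hfA, ofMul_inv, ha, ofMul_toMul, map_neg, ← Module.End.mul_apply,
      ← map_mul, mul_inv_cancel, (conjRep A).map_one, Module.End.one_apply, neg_add_cancel]

theorem IsComplementOfIn.exists_isCrossedHom {K : Subgroup G} (hK : IsComplementOfIn K A ⊤) :
    ∃ f : G → Additive A, IsCrossedHom (conjRep A) f ∧ (∀ a : A, f a = Additive.ofMul a) ∧
      ∀ g, g ∈ K ↔ f g = 0 := by
  obtain ⟨-, hKA, hKA_top⟩ := hK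
  have hex (g : G) : ∃ a : A, (a : G)⁻¹ * g ∈ K := by
    have : g⁻¹ ∈ (K : Set G) * A := by rw [hKA_top, Subgroup.coe_top]; trivial
    obtain ⟨k, hk, a, ha, hka⟩ := Set.mem_mul.mp this
    refine ⟨⟨a, ha⟩⁻¹, ?_⟩
    rw [Subgroup.coe_inv, inv_inv, ← inv_inv g, ← hka, mul_inv_rev, mul_inv_cancel_left]
    exact K.inv_mem hk
  have huniq (g : G) (a b : A) (ha : (a : G)⁻¹ * g ∈ K) (hb : (b : G)⁻¹ * g ∈ K) : a = b := by
    have hmem : ((a : G)⁻¹ * g) * ((b : G)⁻¹ * g)⁻¹ ∈ K ⊓ A :=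
      ⟨K.mul_mem ha (K.inv_mem hb), by simpa [mul_assoc] using A.mul_mem (A.inv_mem a.2) b.2⟩
    rw [hKA, Subgroup.mem_bot] at hmem
    exact Subtype.ext (by simpa [mul_assoc, inv_mul_eq_one] using hmem)
  choose φ hφ using hex
  refine ⟨fun g => Additive.ofMul (φ g), fun g h => ?_, fun a => ?_, fun g => ?_⟩
  · refine Additive.toMul.injective (huniq (g * h) _ _ (hφ _) ?_)
    convert K.mul_mem (hφ g) (hφ h) using 1
    simp only [toMul_add, toMul_ofMul, Subgroup.coe_mul, coe_toMul_conjRep_apply, mul_inv_rev,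
      inv_inv]
    group
  · show Additive.ofMul (φ a) = _
    rw [huniq a (φ a) a (hφ a) (by simp)]
  · rw [← ofMul_one, Additive.ofMul.injective.eq_iff]
    exact ⟨fun hg => huniq g _ 1 (hφ g) (by simpa), fun h1 => by simpa [h1] using hφ g⟩

theorem IsCrossedHom.apply_inv_mul_mul {f : G → Additive A} (hf : IsCrossedHom (conjRep A) f)
    (hfA : ∀ a : A, f a = Additive.ofMul a) (c : A) (g : G) :
    f ((c : G)⁻¹ * g * c) = f g + (conjRep A g (Additive.ofMul c) - Additive.ofMul c) := by
  rw [mul_assoc, hf, hf, ← Subgroup.coe_inv, hfA, hfA, conjRep_eq_one_of_mem (c⁻¹).2, ofMul_inv,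
    Module.End.one_apply]
  abel

theorem hasComplementIn_top_of_center_inf_eq_bot [Finite A] (hA : commutator G ≤ A)
    (hz : Subgroup.center G ⊓ A = ⊥) : HasComplementIn A ⊤ := by
  obtain ⟨f, hf, hfA⟩ := exists_isCrossedHom_eq_ofMul hA hz
  exact ⟨hf.ker, hf.isComplementOfIn_ker hfA⟩

theorem IsComplementOfIn.exists_map_conj_eq [Finite A] (hA : commutator G ≤ A)
    (hz : Subgroup.center G ⊓ A = ⊥) {K₁ K₂ : Subgroup G} (hK₁ : IsComplementOfIn K₁ A ⊤)
    (hK₂ : IsComplementOfIn K₂ A ⊤) : ∃ c ∈ A, K₁.map (MulAut.conj c).toMonoidHom = K₂ := by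
  obtain ⟨f₁, hf₁, hf₁A, hK₁f⟩ := hK₁.exists_isCrossedHom
  obtain ⟨f₂, hf₂, hf₂A, hK₂f⟩ := hK₂.exists_isCrossedHom
  obtain ⟨b, hb⟩ := (hf₂.sub hf₁).exists_eq_coboundary hA hz fun a ha => by
    simp [hf₁A ⟨a, ha⟩, hf₂A ⟨a, ha⟩]
  refine ⟨b.toMul, b.toMul.2, Subgroup.ext fun g => ?_⟩
  rw [Subgroup.mem_map_equiv, MulAut.conj_symm_apply, hK₁f, hK₂f, hf₁.apply_inv_mul_mul hf₁A,
    ofMul_toMul, ← hb g, Pi.sub_apply, add_sub_cancel]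

end Complements

/-- **Yonaha's theorem.** Let `G` be a finite metabelian group with `Z(G) ∩ G' = 1`.
Then `G'` has a complement in `G` and any two complements are conjugate. -/
theorem yonaha {G : Type*} [Group G] [Finite G]
    (hmeta : IsMulCommutative (commutator G))
    (hz : Subgroup.center G ⊓ commutator G = ⊥) :
    HasComplementIn (commutator G) ⊤ ∧
    ∀ K₁ K₂ : Subgroup G, IsComplementOfIn K₁ (commutator G) ⊤ →
      IsComplementOfIn K₂ (commutator G) ⊤ →
      ∃ g : G, Subgroup.map (MulAut.conj g).toMonoidHom K₁ = K₂ := by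
  refine ⟨hasComplementIn_top_of_center_inf_eq_bot le_rfl hz, fun K₁ K₂ hK₁ hK₂ => ?_⟩
  obtain ⟨c, -, hc⟩ := hK₁.exists_map_conj_eq le_rfl hz hK₂
  exact ⟨c, hc⟩
end

section
/- For every nontrivial finite group K there exist a finite group G and a normal subgroup N of G such that G/N is isomorphic to K and N has no complement in G. -/
open Pointwise

universe u

namespace NCAux

variable {K : Type u} [Group K]

/-- Coset space `K ⧸ ⟨x⟩`. -/
abbrev Om (x : K) : Type u := K ⧸ Subgroup.zpowers x

/-- The cyclic group of order `p^2` (as a multiplicative group). -/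
abbrev A (p : ℕ) : Type := Multiplicative (ZMod (p ^ 2))

variable (x : K) (p : ℕ)

/-- `K` acts on functions `Om x → A p`. -/
def phi : K →* MulAut (Om x → A p) where
  toFun k :=
    { toFun := fun F ω => F (k⁻¹ • ω)
      invFun := fun F ω => F (k • ω)
      left_inv := fun F => funext fun ω => by show F (k⁻¹ • k • ω) = F ω; rw [inv_smul_smul]
      right_inv := fun F => funext fun ω => by show F (k • k⁻¹ • ω) = F ω; rw [smul_inv_smul]
      map_mul' := fun F G => rfl }
  map_one' := by ext F ω; simp
  map_mul' := fun k l => by ext F ω; simp [mul_smul]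

@[simp] lemma phi_apply (k : K) (F : Om x → A p) (ω : Om x) :
    phi x p k F ω = F (k⁻¹ • ω) := rfl

/-- The ambient wreath-type group. -/
abbrev W := (Om x → A p) ⋊[phi x p] K

lemma pow_mod (hx : x ^ (p ^ 2) = 1) (n : ℕ) : x ^ (n % p ^ 2) = x ^ n := by
  conv_rhs => rw [← Nat.div_add_mod n (p ^ 2)]
  rw [pow_add, pow_mul, hx, one_pow, one_mul]

/-- Projection `ZMod (p^2) → ⟨x⟩ ≤ K`, `1 ↦ x`. -/
def pim [NeZero p] (hx : x ^ (p ^ 2) = 1) : A p →* K where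
  toFun u := x ^ (Multiplicative.toAdd u).val
  map_one' := by
    haveI : NeZero (p ^ 2) := ⟨pow_ne_zero 2 (NeZero.ne p)⟩
    simp
  map_mul' := fun a b => by
    haveI : NeZero (p ^ 2) := ⟨pow_ne_zero 2 (NeZero.ne p)⟩
    show x ^ (Multiplicative.toAdd a + Multiplicative.toAdd b).val = _
    rw [ZMod.val_add, pow_mod x p hx, pow_add]

end NCAux

namespace NCAux

variable {K : Type u} [Group K] (x : K) (p : ℕ)

/-- Coset representative. -/
noncomputable def r (ω : Om x) : K := Quotient.out ω

lemma mk_r (ω : Om x) : (QuotientGroup.mk (r x ω) : Om x) = ω := QuotientGroup.out_eq' ω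

/-- The "transport" cocycle. -/
noncomputable def gf (k : K) (ω : Om x) : K := (r x ω)⁻¹ * k * r x (k⁻¹ • ω)

lemma gf_mem (k : K) (ω : Om x) : gf x k ω ∈ Subgroup.zpowers x := by
  have h : (QuotientGroup.mk (r x ω) : Om x) = QuotientGroup.mk (k * r x (k⁻¹ • ω)) := by
    have h2 : (QuotientGroup.mk (k * r x (k⁻¹ • ω)) : Om x)
        = k • (QuotientGroup.mk (r x (k⁻¹ • ω)) : Om x) := rfl
    rw [h2, mk_r, mk_r, smul_inv_smul]
  have := QuotientGroup.eq.mp h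
  rw [gf, mul_assoc]
  exact this

lemma gf_mul (k l : K) (ω : Om x) : gf x (k * l) ω = gf x k ω * gf x l (k⁻¹ • ω) := by
  simp only [gf, mul_smul, mul_inv_rev]
  group

lemma gf_one (ω : Om x) : gf x 1 ω = 1 := by
  simp [gf]

lemma gf_inv (k : K) (ω : Om x) : gf x k⁻¹ ω = (gf x k (k • ω))⁻¹ := by
  simp only [gf, mul_inv_rev, inv_inv, inv_smul_smul]
  group

variable [NeZero p]

/-- The subgroup of the wreath product which is our extension. -/
noncomputable def Gsub (hx : x ^ (p ^ 2) = 1) : Subgroup (W x p) where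
  carrier := { w | ∀ ω, pim x p hx (w.left ω) = gf x w.right ω }
  one_mem' := fun ω => by
    simp [SemidirectProduct.one_left, SemidirectProduct.one_right, gf_one]
  mul_mem' := by
    intro a b ha hb ω
    rw [SemidirectProduct.mul_left, SemidirectProduct.mul_right, Pi.mul_apply, map_mul,
      ha ω, phi_apply, hb, gf_mul]
  inv_mem' := by
    intro a ha ω
    rw [SemidirectProduct.inv_left, SemidirectProduct.inv_right, phi_apply, inv_inv,
      Pi.inv_apply, map_inv, ha, ← gf_inv]

/-- Projection onto `K`. -/
noncomputable def psi (hx : x ^ (p ^ 2) = 1) : Gsub x p hx →* K :=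
  (SemidirectProduct.rightHom).comp (Gsub x p hx).subtype

lemma exists_nat_pow (hx : x ^ (p ^ 2) = 1) (g : K) (hg : g ∈ Subgroup.zpowers x) : ∃ n : ℕ, x ^ n = g := by
  obtain ⟨m, hm⟩ := hg
  have hm' : x ^ m = g := hm
  refine ⟨(m % (p ^ 2 : ℕ)).toNat, ?_⟩
  have hpos : (0 : ℤ) < (p ^ 2 : ℕ) := by
    have := NeZero.pos p
    positivity
  have h1 : ((m % (p ^ 2 : ℕ)).toNat : ℤ) = m % (p ^ 2 : ℕ) :=
    Int.toNat_of_nonneg (Int.emod_nonneg _ (ne_of_gt hpos))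
  have h2 : x ^ ((m % (p ^ 2 : ℕ)) : ℤ) = x ^ m := by
    conv_rhs => rw [← Int.emod_add_mul_ediv m (p ^ 2 : ℕ)]
    rw [zpow_add, zpow_mul]
    norm_cast
    rw [hx, one_zpow, mul_one]
  rw [← hm', ← h2, ← zpow_natCast, h1]

lemma psi_surj (hx : x ^ (p ^ 2) = 1) : Function.Surjective (psi x p hx) := by
  intro k
  choose n hn using fun ω => exists_nat_pow x p hx (gf x k ω) (gf_mem x k ω)
  haveI : NeZero (p ^ 2) := ⟨pow_ne_zero 2 (NeZero.ne p)⟩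
  refine ⟨⟨⟨fun ω => Multiplicative.ofAdd ((n ω : ZMod (p ^ 2))), k⟩, fun ω => ?_⟩, rfl⟩
  show x ^ (((n ω : ZMod (p ^ 2))).val) = gf x k ω
  rw [ZMod.val_natCast, pow_mod x p hx, hn]

end NCAux

namespace NCAux

variable {K : Type u} [Group K] (x : K) (p : ℕ)

lemma pow_left_fixed (a : W x p) (ω : Om x) (hfix : a.right⁻¹ • ω = ω) (n : ℕ) :
    ((a ^ n).left) ω = (a.left ω) ^ n := by
  induction n with
  | zero => simp [SemidirectProduct.one_left]
  | succ n ih =>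
    have h : (a ^ (n + 1)).left ω = a.left ω * (a ^ n).left (a.right⁻¹ • ω) := by
      simp only [pow_succ']; rfl
    rw [h, hfix, ih]
    simp only [pow_succ']

end NCAux


open NCAux in
/-- For every nontrivial finite group `K` there exist a finite group `G` and a normal
subgroup `N ⊴ G` such that `G/N ≅ K` and `N` has no complement in `G`. -/
theorem exists_extension_without_complement (K : Type u) [Group K] [Finite K]
    [Nontrivial K] :
    ∃ (G : Type u) (_ : Group G) (_ : Finite G) (N : Subgroup G) (_ : N.Normal),
      Nonempty ((G ⧸ N) ≃* K) ∧ ¬ HasComplementIn N ⊤ := by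
  have hcard : Nat.card K ≠ 1 := Nat.ne_of_gt Finite.one_lt_card
  obtain ⟨p, hp, hdvd⟩ := Nat.exists_prime_and_dvd hcard
  haveI : Fact p.Prime := ⟨hp⟩
  haveI : NeZero p := ⟨hp.ne_zero⟩
  haveI : NeZero (p ^ 2) := ⟨pow_ne_zero 2 hp.ne_zero⟩
  obtain ⟨x, hxord⟩ := exists_prime_orderOf_dvd_card' p hdvd
  have hxp : x ^ p = 1 := by rw [← hxord]; exact pow_orderOf_eq_one x
  have hx : x ^ (p ^ 2) = 1 := by rw [pow_two, pow_mul, hxp, one_pow]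
  have hx1 : x ≠ 1 := by
    intro h; rw [h, orderOf_one] at hxord; exact hp.ne_one hxord.symm
  haveI : Finite (W x p) :=
    Finite.of_injective (fun w => (w.left, w.right))
      (fun a b h => SemidirectProduct.ext (congrArg Prod.fst h) (congrArg Prod.snd h))
  refine ⟨↥(Gsub x p hx), inferInstance, inferInstance, (psi x p hx).ker, inferInstance,
    ⟨QuotientGroup.quotientKerEquivOfSurjective _ (psi_surj x p hx)⟩, ?_⟩
  rintro ⟨L, -, hint, hmul⟩
  obtain ⟨g, hg⟩ := psi_surj x p hx x
  have hgm : g ∈ (L : Set ↥(Gsub x p hx)) * ((psi x p hx).ker : Set ↥(Gsub x p hx)) := by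
    rw [hmul]; simp
  obtain ⟨l, hl, nn, hnn, hln⟩ := Set.mem_mul.mp hgm
  have hpsil : psi x p hx l = x := by
    have h1 : psi x p hx nn = 1 := hnn
    have h2 := congrArg (psi x p hx) hln
    rw [map_mul, h1, mul_one] at h2
    rw [h2, hg]
  have hlp : l ^ p = 1 := by
    have h1 : l ^ p ∈ L ⊓ (psi x p hx).ker :=
      ⟨pow_mem hl p, by show psi x p hx (l ^ p) = 1; rw [map_pow, hpsil, hxp]⟩
    rw [hint] at h1
    exact Subgroup.mem_bot.mp h1
  set ω₀ : Om x := QuotientGroup.mk 1 with hω₀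
  have hfix : x⁻¹ • ω₀ = ω₀ := by
    show ((x⁻¹ * 1 : K) : Om x) = ((1 : K) : Om x)
    exact QuotientGroup.eq.mpr (by simp [Subgroup.mem_zpowers x])
  have hright : (l : W x p).right = x := hpsil
  have hcond : pim x p hx ((l : W x p).left ω₀) = gf x x ω₀ := by
    have h := l.2 ω₀
    rwa [hright] at h
  have hgf : gf x x ω₀ = x := by
    have hr : r x ω₀ ∈ Subgroup.zpowers x := by
      have h := QuotientGroup.eq.mp (mk_r x ω₀)
      simp only [mul_one] at h
      exact inv_mem_iff.mp h
    obtain ⟨m, hm⟩ := hr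
    rw [gf, hfix, ← hm]
    group
  have hpow : (((l : W x p)).left ω₀) ^ p = 1 := by
    have hc : ((l : W x p) ^ p) = 1 := by
      have h := congrArg Subtype.val hlp
      simpa using h
    have h2 := pow_left_fixed x p (l : W x p) ω₀ (by rw [hright]; exact hfix) p
    rw [hc] at h2
    simpa using h2.symm
  set v : ZMod (p ^ 2) := Multiplicative.toAdd ((l : W x p).left ω₀) with hv
  have hv0 : ((p * v.val : ℕ) : ZMod (p ^ 2)) = 0 := by
    have hsm : p • v = 0 := by
      have h := congrArg Multiplicative.toAdd hpow
      simpa using h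
    push_cast
    rw [ZMod.natCast_val, ZMod.cast_id, ← nsmul_eq_mul]
    exact hsm
  have hdvd2 : p ∣ v.val := by
    have h2 := (ZMod.natCast_eq_zero_iff _ _).mp hv0
    have h3 : p * p ∣ p * v.val := by rw [← pow_two]; exact h2
    exact (mul_dvd_mul_iff_left hp.ne_zero).mp h3
  obtain ⟨c, hc⟩ := hdvd2
  have hfin : x = 1 := by
    have hpim : x ^ v.val = x := hcond.trans hgf
    rw [hc, pow_mul, hxp, one_pow] at hpim
    exact hpim.symm
  exact hx1 hfin
end

section
/- Let N be a finite group with Z(N) ∩ N' ≠ 1 and let q > 1 be an integer coprime to |N|. Then there exist a finite group G, a normal subgroup N₀ of G isomorphic to N, and a normal subgroup H of G with N₀ ≤ H, such that N₀ has a complement in H but no complement in G, the quotient G/H is cyclic of order q, and the set of prime divisors of |H| equals the set of prime divisors of |N|. In particular, Gaschütz' theorem does not hold for N. -/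
open Pointwise

universe u

/-!
Pick `z ≠ 1` in `Z(N) ∩ N'`, let `W = N ≀ C_q` and let `z̄ ∈ N^q ≤ W` be the constant vector with
value `z`. In `G = (N × W) ⧸ ⟨(z, z̄)⟩` the image of `N × N^q` is a normal subgroup `H` with
`G / H ≅ C_q`, and the graph of `w ↦ w 1` (which contains `(z, z̄)`) gives a complement of `N` in
`H`. A complement of `N` in `G` would lift to a homomorphism `F : W → N` with `F z̄ = z`. As `q` is
coprime to `|N|`, `F` kills the top group `C_q`, so `F` is invariant under shifting coordinates;
its restrictions to two different coordinates then have commuting images, so they kill `N'`, and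
`F z̄`, a product of such values at `z ∈ N'`, is `1`.
-/

open SemidirectProduct

theorem Subgroup.normal_of_le_center {G : Type*} [Group G] {H : Subgroup G}
    (h : H ≤ center G) : H.Normal :=
  ⟨fun n hn g => by rwa [mem_center_iff.mp (h hn) g, mul_inv_cancel_right]⟩

instance SemidirectProduct.finite {N G : Type*} [Group N] [Group G] {φ : G →* MulAut N}
    [Finite N] [Finite G] : Finite (N ⋊[φ] G) :=
  Finite.of_equiv _ equivProd.symm

theorem MonoidHom.map_eq_one_of_pow_eq_one_of_coprime {A M : Type*} [Monoid A] [Group M]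
    (f : A →* M) {a : A} {n : ℕ} (ha : a ^ n = 1) (hn : n.Coprime (Nat.card M)) :
    f a = 1 :=
  (pow_eq_one_iff_of_coprime hn).mp ⟨by rw [← map_pow, ha, map_one], pow_card_eq_one'⟩

section QuotientOfProd

variable {N P : Type*} [Group N] [Group P] (Z : Subgroup (N × P)) [Z.Normal]

def inlMod : N →* (N × P) ⧸ Z := (QuotientGroup.mk' Z).comp (MonoidHom.inl N P)

variable {Z}

theorem inlMod_injective (hZ : Z ⊓ (MonoidHom.snd N P).ker = ⊥) :
    Function.Injective (inlMod Z) := by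
  refine (injective_iff_map_eq_one _).mpr fun n hn => ?_
  have hmem : ((n, 1) : N × P) ∈ Z ⊓ (MonoidHom.snd N P).ker :=
    ⟨(QuotientGroup.eq_one_iff _).mp hn, rfl⟩
  rw [hZ, Subgroup.mem_bot] at hmem
  exact congrArg Prod.fst hmem

instance inlMod_range_normal : (inlMod Z).range.Normal := by
  rw [inlMod, MonoidHom.range_comp]
  have : (MonoidHom.inl N P).range = (MonoidHom.snd N P).ker := by
    ext ⟨n, p⟩
    simp [eq_comm, Subgroup.mem_prod]
  exact (this ▸ MonoidHom.normal_ker _).map _ (QuotientGroup.mk'_surjective Z)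

theorem hasComplementIn_of_le_range_prod {B : Type*} [Group B] {ι : B →* P}
    (hι : Function.Injective ι) (F : B →* N) (hZ : Z ≤ (F.prod ι).range) :
    HasComplementIn (inlMod Z).range
      ((QuotientGroup.mk' Z).comp ((MonoidHom.id N).prodMap ι)).range := by
  refine ⟨((QuotientGroup.mk' Z).comp (F.prod ι)).range, ?_, ?_, ?_⟩
  · rintro _ ⟨b, rfl⟩
    exact ⟨(F b, b), rfl⟩
  · refine eq_bot_iff.mpr ?_
    rintro _ ⟨⟨b, rfl⟩, n, hn⟩
    obtain ⟨b', hb'⟩ := hZ (QuotientGroup.eq.mp hn)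
    have hb'b : b' = b := hι (by simpa using congrArg Prod.snd hb')
    have hn1 : n = 1 := by simpa [hb'b] using congrArg Prod.fst hb'
    rw [Subgroup.mem_bot, ← hn, hn1, map_one]
  · ext g
    simp only [Set.mem_mul, SetLike.mem_coe, MonoidHom.mem_range]
    constructor
    · rintro ⟨_, ⟨b, rfl⟩, _, ⟨n, rfl⟩, rfl⟩
      exact ⟨(F b * n, b), by simp [inlMod, ← QuotientGroup.mk_mul]⟩
    · rintro ⟨⟨n, b⟩, rfl⟩
      exact ⟨_, ⟨b, rfl⟩, _, ⟨(F b)⁻¹ * n, rfl⟩, by simp [inlMod, ← QuotientGroup.mk_mul]⟩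

theorem bijective_snd_comp_subtype_comap_of_isComplementOfIn
    (hZ : Z ⊓ (MonoidHom.snd N P).ker = ⊥) {K : Subgroup ((N × P) ⧸ Z)}
    (hK : IsComplementOfIn K (inlMod Z).range ⊤) :
    Function.Bijective ((MonoidHom.snd N P).comp (K.comap (QuotientGroup.mk' Z)).subtype) := by
  obtain ⟨-, hdisj, hmul⟩ := hK
  constructor
  · refine (injective_iff_map_eq_one _).mpr fun ⟨x, hxK⟩ hx => ?_
    have hx' : x = (x.1, 1) := Prod.ext rfl hx
    have hmk : QuotientGroup.mk' Z x ∈ K ⊓ (inlMod Z).range :=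
      ⟨hxK, x.1, by rw [hx']; rfl⟩
    rw [hdisj, Subgroup.mem_bot, QuotientGroup.mk'_apply, QuotientGroup.eq_one_iff] at hmk
    have hxZ : x ∈ Z ⊓ (MonoidHom.snd N P).ker := ⟨hmk, hx⟩
    rw [hZ, Subgroup.mem_bot] at hxZ
    exact Subtype.ext hxZ
  · intro p
    have hp : QuotientGroup.mk' Z (1, p) ∈ (K : Set ((N × P) ⧸ Z)) * ((inlMod Z).range : Set _) :=
      by rw [hmul]; trivial
    obtain ⟨k, hk, _, ⟨n, rfl⟩, hkn⟩ := hp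
    have hk' : k = QuotientGroup.mk' Z (n⁻¹, p) := by
      rw [eq_mul_inv_of_mul_eq hkn]
      simp [inlMod, ← QuotientGroup.mk_inv, ← QuotientGroup.mk_mul]
    exact ⟨⟨(n⁻¹, p), by rw [Subgroup.mem_comap, ← hk']; exact hk⟩, rfl⟩

theorem exists_monoidHom_of_hasComplementIn_top (hZ : Z ⊓ (MonoidHom.snd N P).ker = ⊥)
    (h : HasComplementIn (inlMod Z).range ⊤) : ∃ F : P →* N, ∀ x ∈ Z, F x.2 = x.1 := by
  obtain ⟨K, hK⟩ := h
  let e := MulEquiv.ofBijective _ (bijective_snd_comp_subtype_comap_of_isComplementOfIn hZ hK)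
  refine ⟨(MonoidHom.fst N P).comp ((Subgroup.subtype _).comp e.symm.toMonoidHom),
    fun x hx => ?_⟩
  have hxK : x ∈ K.comap (QuotientGroup.mk' Z) := by
    rw [Subgroup.mem_comap, QuotientGroup.mk'_apply, (QuotientGroup.eq_one_iff x).mpr hx]
    exact one_mem K
  have he : e.symm x.2 = ⟨x, hxK⟩ := e.symm_apply_eq.mpr rfl
  simp [he]

end QuotientOfProd

section Wreath

variable (D Q : Type*) [Group D] [Group Q]

-- `D ≀ Q`, as a semidirect product rather than `RegularWreathProduct`, for the `inl`/`inr` API.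
abbrev Wreath : Type _ := (Q → D) ⋊[mulAutArrow] Q

variable {D Q}

theorem mulAutArrow_mulSingle [DecidableEq Q] (g : Q) (d : D) :
    mulAutArrow g (Pi.mulSingle (M := fun _ : Q => D) 1 d) = Pi.mulSingle g d := by
  funext a
  rw [mulAutArrow_apply_apply]
  show Pi.mulSingle (M := fun _ : Q => D) 1 d (g⁻¹ * a) = _
  simp [Pi.mulSingle_apply, inv_mul_eq_one, eq_comm]

theorem inl_const_mem_center {z : D} (hz : z ∈ Subgroup.center D) :
    (inl fun _ => z : Wreath D Q) ∈ Subgroup.center (Wreath D Q) := by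
  refine Subgroup.mem_center_iff.mpr fun g => ?_
  ext a
  · simp only [mul_left, left_inl, Pi.mul_apply, mulAutArrow_apply_apply, right_inl, map_one,
      MulAut.one_apply]
    exact Subgroup.mem_center_iff.mp hz (g.left a)
  · simp

variable {M : Type*} [Group M] (hQM : (Nat.card Q).Coprime (Nat.card M)) (F : Wreath D Q →* M)
include hQM

theorem map_inr_eq_one_of_coprime (g : Q) : F (inr g) = 1 :=
  (F.comp inr).map_eq_one_of_pow_eq_one_of_coprime pow_card_eq_one' hQM

theorem map_inl_mulSingle_of_coprime [DecidableEq Q] (g : Q) (d : D) :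
    F (inl (Pi.mulSingle g d)) = F (inl (Pi.mulSingle 1 d)) := by
  rw [← mulAutArrow_mulSingle, inl_aut, map_mul, map_mul, map_inr_eq_one_of_coprime hQM,
    map_inr_eq_one_of_coprime hQM, one_mul, mul_one]

theorem commutator_le_ker_comp_mulSingle_of_coprime [DecidableEq Q] [Nontrivial Q] :
    commutator D ≤ (F.comp (inl.comp (MonoidHom.mulSingle _ 1))).ker := by
  obtain ⟨g, hg⟩ := exists_ne (1 : Q)
  rw [commutator_def, Subgroup.commutator_le]
  intro a _ b _
  have hcomm := (Pi.mulSingle_commute hg.symm a b).map (F.comp inl)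
  simp only [MonoidHom.comp_apply, map_inl_mulSingle_of_coprime hQM F g] at hcomm
  rw [MonoidHom.mem_ker, map_commutatorElement, commutatorElement_eq_one_iff_commute]
  exact hcomm

theorem map_inl_const_eq_one_of_coprime [Finite Q] [Nontrivial Q] {z : D}
    (hz : z ∈ commutator D) : F (inl fun _ => z) = 1 := by
  classical
  have := Fintype.ofFinite Q
  have h := Finset.univ.map_noncommProd (fun i => Pi.mulSingle i z)
    (fun i _ j _ _ => Pi.mulSingle_apply_commute (fun _ => z) i j) (F.comp inl)
  rw [Finset.noncommProd_mulSingle] at h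
  rw [← MonoidHom.comp_apply, h]
  refine (Finset.noncommProd_eq_pow_card _ _ _ 1 fun g _ => ?_).trans (one_pow _)
  rw [MonoidHom.comp_apply, map_inl_mulSingle_of_coprime hQM]
  exact commutator_le_ker_comp_mulSingle_of_coprime hQM F hz

end Wreath

section Construction

variable {N : Type*} (Q : Type*) [Group N] [Group Q] (z : Subgroup.center N)

def diagZPowers : Subgroup (N × Wreath N Q) := Subgroup.zpowers ((z : N), inl fun _ => (z : N))

instance : (diagZPowers Q z).Normal :=
  Subgroup.normal_of_le_center <| Subgroup.zpowers_le.mpr <| by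
    rw [Subgroup.center_prod]
    exact ⟨z.2, inl_const_mem_center z.2⟩

abbrev WreathCentralProduct (N Q : Type*) [Group N] [Group Q] (z : Subgroup.center N) :=
  (N × Wreath N Q) ⧸ diagZPowers Q z

theorem diagZPowers_inf_ker_snd [Nonempty Q] :
    diagZPowers Q z ⊓ (MonoidHom.snd _ _).ker = ⊥ := by
  refine eq_bot_iff.mpr fun x ⟨hxZ, hx⟩ => ?_
  obtain ⟨k, rfl⟩ := Subgroup.mem_zpowers_iff.mp hxZ
  have hzk : (z : N) ^ k = 1 := by
    have h : (inl ((fun _ => (z : N)) ^ k) : Wreath N Q) = 1 := by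
      rw [map_zpow]; exact hx
    exact congrFun (inl_injective (h.trans (map_one _).symm)) (Classical.arbitrary Q)
  exact Subgroup.mem_bot.mpr (Prod.ext (by simpa using hzk) hx)

def projTop : WreathCentralProduct N Q z →* Q :=
  QuotientGroup.lift _ (rightHom.comp (MonoidHom.snd _ _)) <|
    Subgroup.zpowers_le.mpr (by simp)

@[simp]
theorem projTop_mk (x : N × Wreath N Q) : projTop Q z x = rightHom x.2 := rfl

theorem projTop_surjective : Function.Surjective (projTop Q z) :=
  fun g => ⟨QuotientGroup.mk' (diagZPowers Q z) (1, inr g), by simp⟩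

theorem ker_projTop :
    (projTop Q z).ker =
      ((QuotientGroup.mk' (diagZPowers Q z)).comp ((MonoidHom.id N).prodMap inl)).range := by
  ext g
  obtain ⟨⟨n, t⟩, rfl⟩ := QuotientGroup.mk'_surjective (diagZPowers Q z) g
  constructor
  · intro ht
    have hright : t.right = 1 := by simpa using ht
    exact ⟨(n, t.left),
      congrArg (QuotientGroup.mk' _) (Prod.ext rfl (SemidirectProduct.ext rfl hright.symm))⟩
  · rintro ⟨⟨n', w⟩, hw⟩
    simp [← hw]

theorem range_inlMod_le_ker_projTop :
    (inlMod (diagZPowers Q z)).range ≤ (projTop Q z).ker := by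
  rintro _ ⟨n, rfl⟩
  simp [inlMod]

theorem hasComplementIn_ker_projTop :
    HasComplementIn (inlMod (diagZPowers Q z)).range (projTop Q z).ker := by
  rw [ker_projTop]
  exact hasComplementIn_of_le_range_prod inl_injective (Pi.evalMonoidHom _ 1)
    (Subgroup.zpowers_le.mpr ⟨fun _ => z, rfl⟩)

theorem not_hasComplementIn_top [Finite Q] [Nontrivial Q]
    (hQN : (Nat.card Q).Coprime (Nat.card N)) (hz : (z : N) ∈ commutator N)
    (hz1 : (z : N) ≠ 1) :
    ¬ HasComplementIn (inlMod (diagZPowers Q z)).range ⊤ := fun h => by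
  obtain ⟨F, hF⟩ := exists_monoidHom_of_hasComplementIn_top (diagZPowers_inf_ker_snd Q z) h
  have hFz := hF _ (Subgroup.mem_zpowers _)
  rw [map_inl_const_eq_one_of_coprime hQN F hz] at hFz
  exact hz1 hFz.symm

theorem card_ker_projTop_dvd [Finite Q] :
    Nat.card (projTop Q z).ker ∣ Nat.card N ^ (Nat.card Q + 1) := by
  rw [ker_projTop, pow_succ', ← Nat.card_fun, ← Nat.card_prod]
  exact Subgroup.card_range_dvd _

theorem prime_dvd_card_ker_projTop_iff [Finite Q] [Nonempty Q] {p : ℕ} (hp : p.Prime) :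
    p ∣ Nat.card (projTop Q z).ker ↔ p ∣ Nat.card N := by
  refine ⟨fun h => hp.dvd_of_dvd_pow (h.trans (card_ker_projTop_dvd Q z)), fun h => ?_⟩
  have hN := Nat.card_congr
    (MonoidHom.ofInjective (inlMod_injective (diagZPowers_inf_ker_snd Q z))).toEquiv
  exact (hN ▸ h).trans (Subgroup.card_dvd_of_le (range_inlMod_le_ker_projTop Q z))

end Construction

/-- If `Z(N) ∩ N' ≠ 1` and `q > 1` is coprime to `|N|`, then there are finite groups
`N₀ ≤ H ≤ G` with `N₀ ≅ N`, `N₀ ⊴ G`, `H ⊴ G`, such that `N₀` has a complement in `H`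
but not in `G`, `G/H` is cyclic of order `q`, and `|H|` has the same prime divisors
as `|N|`. In particular, Gaschütz' theorem does not hold for `N`. -/
theorem not_gaschuetz_of_center_inter_commutator_ne_bot (N : Type u) [Group N]
    [Finite N] (hZ : Subgroup.center N ⊓ commutator N ≠ ⊥)
    (q : ℕ) (hq : 1 < q) (hcop : Nat.Coprime q (Nat.card N)) :
    (∃ (G : Type u) (_ : Group G) (_ : Finite G) (N₀ H : Subgroup G)
        (_ : N₀.Normal) (_ : H.Normal),
      Nonempty (N₀ ≃* N) ∧ N₀ ≤ H ∧
      HasComplementIn N₀ H ∧ ¬ HasComplementIn N₀ ⊤ ∧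
      IsCyclic (G ⧸ H) ∧ Nat.card (G ⧸ H) = q ∧
      (∀ p : ℕ, p.Prime → (p ∣ Nat.card H ↔ p ∣ Nat.card N))) ∧
    ¬ GaschuetzHolds N := by
  obtain ⟨z, ⟨hzZ, hzD⟩, hz1⟩ := (Subgroup.bot_or_exists_ne_one _).resolve_left hZ
  have : Fact (1 < q) := ⟨hq⟩
  let Q := Multiplicative (ZMod q)
  let z' : Subgroup.center N := ⟨z, hzZ⟩
  have hQ : Nat.card Q = q := by simp [Q]
  have hinj := inlMod_injective (diagZPowers_inf_ker_snd Q z')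
  have hNH := range_inlMod_le_ker_projTop Q z'
  have hcompl := hasComplementIn_ker_projTop Q z'
  have hnot := not_hasComplementIn_top Q z' (hQ ▸ hcop) hzD hz1
  let eQ := QuotientGroup.quotientKerEquivOfSurjective _ (projTop_surjective Q z')
  have hcard : Nat.card (_ ⧸ (projTop Q z').ker) = q := (Nat.card_congr eQ.toEquiv).trans hQ
  refine ⟨⟨WreathCentralProduct N Q z', inferInstance, inferInstance, _, _, inferInstance,
    inferInstance, ⟨(MonoidHom.ofInjective hinj).symm⟩, hNH, hcompl, hnot,
    isCyclic_of_surjective eQ.symm eQ.symm.surjective, hcard,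
    fun p hp => prime_dvd_card_ker_projTop_iff Q z' hp⟩, fun hG => hnot ?_⟩
  exact hG _ _ _ hinj inferInstance hNH (by rw [Subgroup.index, hcard]; exact hcop.symm) hcompl
end

section
/- Let N be a finite perfect group (N' = N) with trivial center such that Inn(N) has no complement in Aut(N). Then for every finite group M, Gaschütz' theorem does not hold for the direct product N × M. -/
open Pointwise

universe u

universe v

namespace GaschuetzCX

open SemidirectProduct

variable {N : Type u} [Group N]

theorem conj_mulaut (g : MulAut N) (n : N) :
    MulAut.conj (g n) = g * MulAut.conj n * g⁻¹ := by
  apply MulEquiv.ext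
  intro x
  rw [MulAut.conj_apply, MulAut.mul_apply, MulAut.mul_apply, MulAut.conj_apply,
    map_mul, map_mul, map_inv, MulAut.inv_def, MulEquiv.apply_symm_apply]

instance conj_range_normal : ((MulAut.conj : N →* MulAut N).range).Normal := by
  constructor
  rintro x ⟨n, rfl⟩ g
  exact ⟨g n, conj_mulaut g n⟩

theorem conj_eq_one (hz : Subgroup.center N = ⊥) {n : N}
    (h : (MulAut.conj n : MulAut N) = 1) : n = 1 := by
  have hc : n ∈ Subgroup.center N := by
    rw [Subgroup.mem_center_iff]
    intro g
    have h2 := congrArg (fun e : MulAut N => e g) h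
    simp only [MulAut.conj_apply, MulAut.one_apply] at h2
    calc g * n = (n * g * n⁻¹) * n := by rw [h2]
      _ = n * g := by group
  rw [hz, Subgroup.mem_bot] at hc
  exact hc

variable (N) in
/-- the cyclic shift on `q`-tuples of automorphisms -/
def shiftE (q : ℕ) (c : ZMod q) : (ZMod q → MulAut N) ≃* (ZMod q → MulAut N) where
  toFun v i := v (i - c)
  invFun v i := v (i + c)
  left_inv v := funext fun i => by simp
  right_inv v := funext fun i => by simp
  map_mul' v w := rfl

variable (N) in
def shiftHom (q : ℕ) : Multiplicative (ZMod q) →* MulAut (ZMod q → MulAut N) :=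
  MonoidHom.mk' (fun j => shiftE N q (Multiplicative.toAdd j)) (by
    intro a b
    apply MulEquiv.ext
    intro v
    funext i
    rw [MulAut.mul_apply]
    show v (i - (Multiplicative.toAdd (a * b))) = v (i - Multiplicative.toAdd a - Multiplicative.toAdd b)
    rw [toAdd_mul, sub_sub])

theorem shiftHom_apply (q : ℕ) (j : Multiplicative (ZMod q)) (w : ZMod q → MulAut N) (i : ZMod q) :
    (shiftHom N q j) w i = w (i - Multiplicative.toAdd j) := rfl

variable (N) in
/-- the ambient "big" semidirect product -/
abbrev Tam (q : ℕ) : Type u := (ZMod q → MulAut N) ⋊[shiftHom N q] Multiplicative (ZMod q)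

variable (N) in
abbrev Pam (q : ℕ) (M : Type v) [Group M] : Type (max u v) := Tam N q × MulAut N × M

variable (N) in
/-- the counterexample group: tuples whose coordinates all have the same image in
`Out(N)`, where the last coordinate is separate (not moved by the shift). -/
def bigSub (q : ℕ) (M : Type v) [Group M] : Subgroup (Pam N q M) where
  carrier := { x | ∀ i : ZMod q,
      ((x.1.left i : MulAut N) : MulAut N ⧸ (MulAut.conj : N →* MulAut N).range)
        = ((x.2.1 : MulAut N) : MulAut N ⧸ (MulAut.conj : N →* MulAut N).range) }
  one_mem' := by
    intro i
    simp [SemidirectProduct.one_left]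
  mul_mem' := by
    intro x y hx hy i
    have h1 : (x * y).1.left i
        = x.1.left i * y.1.left (i - Multiplicative.toAdd x.1.right) := by
      rw [Prod.fst_mul, SemidirectProduct.mul_left, Pi.mul_apply, shiftHom_apply]
    have h2 : (x * y).2.1 = x.2.1 * y.2.1 := by
      rw [Prod.snd_mul, Prod.fst_mul]
    rw [h1, h2, QuotientGroup.mk_mul, QuotientGroup.mk_mul, hx i, hy _]
  inv_mem' := by
    intro x hx i
    have h1 : (x⁻¹).1.left i
        = (x.1.left (i - Multiplicative.toAdd x.1.right⁻¹))⁻¹ := by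
      rw [Prod.fst_inv, SemidirectProduct.inv_left, shiftHom_apply, Pi.inv_apply]
    have h2 : (x⁻¹).2.1 = (x.2.1)⁻¹ := by
      rw [Prod.snd_inv, Prod.fst_inv]
    rw [h1, h2, QuotientGroup.mk_inv, QuotientGroup.mk_inv, hx _]

theorem mem_bigSub {q : ℕ} {M : Type v} [Group M] {x : Pam N q M} :
    x ∈ bigSub N q M ↔ ∀ i : ZMod q,
      ((x.1.left i : MulAut N) : MulAut N ⧸ (MulAut.conj : N →* MulAut N).range)
        = ((x.2.1 : MulAut N) : MulAut N ⧸ (MulAut.conj : N →* MulAut N).range) := Iff.rfl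

variable (N) in
/-- the embedding of `N × M` -/
def fHom (q : ℕ) (M : Type v) [Group M] : N × M →* ↥(bigSub N q M) :=
  MonoidHom.codRestrict
    ((1 : (N × M) →* Tam N q).prod
      (((MulAut.conj : N →* MulAut N).comp (MonoidHom.fst N M)).prod (MonoidHom.snd N M)))
    (bigSub N q M)
    (by
      intro p
      rw [mem_bigSub]
      intro i
      have h1 : (((1 : (N × M) →* Tam N q).prod
          (((MulAut.conj : N →* MulAut N).comp (MonoidHom.fst N M)).prod (MonoidHom.snd N M))) p).1.left i
          = 1 := by
        show (1 : Tam N q).left i = 1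
        rw [SemidirectProduct.one_left]
        rfl
      rw [h1]
      have h2 : ((((1 : (N × M) →* Tam N q).prod
          (((MulAut.conj : N →* MulAut N).comp (MonoidHom.fst N M)).prod (MonoidHom.snd N M))) p).2.1 : MulAut N)
          = MulAut.conj p.1 := rfl
      rw [h2]
      rw [QuotientGroup.mk_one]
      exact ((QuotientGroup.eq_one_iff _).mpr (MonoidHom.mem_range.mpr ⟨p.1, rfl⟩)).symm)

variable (N) in
def tauHom (q : ℕ) (M : Type v) [Group M] : ↥(bigSub N q M) →* Tam N q :=
  (MonoidHom.fst _ _).comp (bigSub N q M).subtype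

variable (N) in
def aHom (q : ℕ) (M : Type v) [Group M] : ↥(bigSub N q M) →* MulAut N :=
  (MonoidHom.fst _ _).comp ((MonoidHom.snd (Tam N q) (MulAut N × M)).comp (bigSub N q M).subtype)

variable (N) in
def chiHom (q : ℕ) (M : Type v) [Group M] : ↥(bigSub N q M) →* Multiplicative (ZMod q) :=
  SemidirectProduct.rightHom.comp (tauHom N q M)

theorem fHom_range_eq (q : ℕ) (M : Type v) [Group M] :
    (fHom N q M).range = (tauHom N q M).ker := by
  ext x
  obtain ⟨⟨t, a, m⟩, hx⟩ := x
  simp only [MonoidHom.mem_range, MonoidHom.mem_ker]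
  constructor
  · rintro ⟨p, hp⟩
    have h1 : ((fHom N q M p : ↥(bigSub N q M)) : Pam N q M).1 = t := congrArg (fun z : ↥(bigSub N q M) => (z : Pam N q M).1) hp
    show t = 1
    exact h1.symm.trans rfl
  · intro hx1
    have hx1' : t = 1 := hx1
    have h0 := (mem_bigSub.mp hx) 0
    have ha : a ∈ (MulAut.conj : N →* MulAut N).range := by
      rw [← QuotientGroup.eq_one_iff (x := a)]
      rw [← h0]
      rw [hx1']
      simp [SemidirectProduct.one_left]
    obtain ⟨n, hn⟩ := ha
    refine ⟨(n, m), ?_⟩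
    apply Subtype.ext
    show ((1 : Tam N q), (MulAut.conj n : MulAut N), m) = ((t, a, m) : Pam N q M)
    rw [hn, hx1']

variable (N) in
/-- the complement of `N × M` inside `H` -/
def K0 (q : ℕ) (M : Type v) [Group M] : Subgroup ↥(bigSub N q M) where
  carrier := { x | (x : Pam N q M).1.right = 1 ∧
      (x : Pam N q M).2.1 = (x : Pam N q M).1.left 0 ∧ (x : Pam N q M).2.2 = 1 }
  one_mem' := by
    refine ⟨rfl, ?_, rfl⟩
    show (1 : MulAut N) = (1 : Tam N q).left 0
    rw [SemidirectProduct.one_left]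
    rfl
  mul_mem' := by
    rintro x y ⟨hxr, hxa, hxm⟩ ⟨hyr, hya, hym⟩
    have hcoe : ((x * y : ↥(bigSub N q M)) : Pam N q M) = (x : Pam N q M) * (y : Pam N q M) := rfl
    refine ⟨?_, ?_, ?_⟩
    · rw [hcoe, Prod.fst_mul, SemidirectProduct.mul_right, hxr, hyr, mul_one]
    · rw [hcoe, Prod.fst_mul, Prod.snd_mul, Prod.fst_mul, SemidirectProduct.mul_left,
        Pi.mul_apply, shiftHom_apply, hxr, hxa, hya]
      have : (0 : ZMod q) - Multiplicative.toAdd (1 : Multiplicative (ZMod q)) = 0 := by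
        simp
      rw [this]
    · rw [hcoe, Prod.snd_mul, Prod.snd_mul, hxm, hym, mul_one]
  inv_mem' := by
    rintro x ⟨hxr, hxa, hxm⟩
    have hcoe : ((x⁻¹ : ↥(bigSub N q M)) : Pam N q M) = ((x : Pam N q M))⁻¹ := rfl
    refine ⟨?_, ?_, ?_⟩
    · rw [hcoe, Prod.fst_inv, SemidirectProduct.inv_right, hxr, inv_one]
    · rw [hcoe, Prod.fst_inv, Prod.snd_inv, Prod.fst_inv, SemidirectProduct.inv_left,
        shiftHom_apply, Pi.inv_apply, hxr, hxa]
      have : (0 : ZMod q) - Multiplicative.toAdd (1 : Multiplicative (ZMod q))⁻¹ = 0 := by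
        simp
      rw [this]
    · rw [hcoe, Prod.snd_inv, Prod.snd_inv, hxm, inv_one]

theorem mem_K0 {q : ℕ} {M : Type v} [Group M] {x : ↥(bigSub N q M)} :
    x ∈ K0 N q M ↔ (x : Pam N q M).1.right = 1 ∧
      (x : Pam N q M).2.1 = (x : Pam N q M).1.left 0 ∧ (x : Pam N q M).2.2 = 1 := Iff.rfl

theorem chiHom_apply {q : ℕ} {M : Type v} [Group M] (x : ↥(bigSub N q M)) :
    chiHom N q M x = (tauHom N q M x).right := by
  show SemidirectProduct.rightHom (tauHom N q M x) = _
  rw [SemidirectProduct.rightHom_eq_right]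

theorem complement_in_H (q : ℕ) (M : Type v) [Group M] :
    IsComplementOfIn (K0 N q M) (fHom N q M).range ((chiHom N q M).ker) := by
  refine ⟨?_, ?_, ?_⟩
  · intro x hx
    rw [MonoidHom.mem_ker, chiHom_apply]
    exact (mem_K0.mp hx).1
  · rw [Subgroup.eq_bot_iff_forall]
    intro x hx
    obtain ⟨hxK, hxR⟩ := hx
    rw [fHom_range_eq] at hxR
    have hτ : (x : Pam N q M).1 = 1 := MonoidHom.mem_ker.mp hxR
    obtain ⟨hr, ha, hm⟩ := mem_K0.mp hxK
    apply Subtype.ext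
    have h1 : (x : Pam N q M).2.1 = 1 := by
      rw [ha, hτ, SemidirectProduct.one_left]
      rfl
    show (x : Pam N q M) = (1 : Pam N q M)
    rw [Prod.ext_iff, Prod.ext_iff]
    exact ⟨hτ, h1, hm⟩
  · ext x
    constructor
    · rintro ⟨k, hk, r, hr, rfl⟩
      have hkK := mem_K0.mp hk
      have hrR : r ∈ (fHom N q M).range := hr
      rw [fHom_range_eq] at hrR
      show k * r ∈ (chiHom N q M).ker
      rw [MonoidHom.mem_ker, map_mul, chiHom_apply, chiHom_apply]
      have h1 : (tauHom N q M k).right = 1 := hkK.1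
      have h2 : (tauHom N q M r).right = 1 := by
        rw [MonoidHom.mem_ker.mp hrR, SemidirectProduct.one_right]
      rw [h1, h2, one_mul]
    · intro hx
      have hxr : (tauHom N q M x).right = 1 := by
        rw [← chiHom_apply]
        exact MonoidHom.mem_ker.mp hx
      have hkmem : (((⟨(tauHom N q M x).left, 1⟩ : Tam N q), (tauHom N q M x).left 0, (1 : M)) : Pam N q M)
          ∈ bigSub N q M := by
        rw [mem_bigSub]
        intro i
        exact ((mem_bigSub.mp x.property) i).trans ((mem_bigSub.mp x.property) 0).symm
      set k : ↥(bigSub N q M) := ⟨_, hkmem⟩ with hkdef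
      have hkK0 : k ∈ K0 N q M := ⟨rfl, rfl, rfl⟩
      have hτk : tauHom N q M k = tauHom N q M x := by
        apply SemidirectProduct.ext
        · rfl
        · exact hxr.symm
      have hrmem : k⁻¹ * x ∈ (fHom N q M).range := by
        rw [fHom_range_eq, MonoidHom.mem_ker, map_mul, map_inv, hτk, inv_mul_cancel]
      exact Set.mem_mul.mpr ⟨k, hkK0, k⁻¹ * x, hrmem, by group⟩

set_option maxHeartbeats 1000000 in
theorem no_complement_top [Finite N] {M : Type v} [Group M]
    (hperf : commutator N = ⊤) (hz : Subgroup.center N = ⊥)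
    (hno : ¬ HasComplementIn (MulAut.conj : N →* MulAut N).range ⊤)
    {q : ℕ} (hq : q.Prime) (hqN : ¬ q ∣ Nat.card N) :
    ¬ HasComplementIn (fHom N q M).range ⊤ := by
  haveI : NeZero q := ⟨hq.pos.ne'⟩
  haveI : Fact (1 < q) := ⟨hq.one_lt⟩
  rintro ⟨K, -, hKinf, hKmul⟩
  set R : Subgroup (MulAut N) := (MulAut.conj : N →* MulAut N).range with hRdef
  set τ : ↥(bigSub N q M) →* Tam N q := tauHom N q M with hτdef
  set α : ↥(bigSub N q M) →* MulAut N := aHom N q M with hαdef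
  -- basic facts
  have hker : ∀ x : ↥(bigSub N q M), τ x = 1 → x ∈ (fHom N q M).range := by
    intro x hx
    rw [fHom_range_eq]
    exact hx
  have hker' : ∀ x : ↥(bigSub N q M), x ∈ (fHom N q M).range → τ x = 1 := by
    intro x hx
    rw [fHom_range_eq] at hx
    exact hx
  have uniq : ∀ k₁ k₂ : ↥(bigSub N q M), k₁ ∈ K → k₂ ∈ K → τ k₁ = τ k₂ → k₁ = k₂ := by
    intro k₁ k₂ h₁ h₂ h
    have hm : k₁ * k₂⁻¹ ∈ K ⊓ (fHom N q M).range := by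
      refine ⟨K.mul_mem h₁ (K.inv_mem h₂), hker _ ?_⟩
      rw [map_mul, map_inv, h, mul_inv_cancel]
    rw [hKinf] at hm
    exact mul_inv_eq_one.mp (Subgroup.mem_bot.mp hm)
  have lift : ∀ g : ↥(bigSub N q M), ∃ k ∈ K, τ k = τ g := by
    intro g
    have hg : g ∈ (K : Set ↥(bigSub N q M)) * ((fHom N q M).range : Set ↥(bigSub N q M)) := by
      rw [hKmul, Subgroup.coe_top]
      trivial
    obtain ⟨k, hk, r, hr, hkr⟩ := Set.mem_mul.mp hg
    refine ⟨k, hk, ?_⟩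
    have hr1 : τ r = 1 := hker' r hr
    calc τ k = τ k * τ r := by rw [hr1, mul_one]
      _ = τ (k * r) := (map_mul τ k r).symm
      _ = τ g := by rw [hkr]
  -- the quotient-compatibility of every element of the big group
  have hcond : ∀ (k : ↥(bigSub N q M)) (i : ZMod q),
      (((τ k).left i : MulAut N) : MulAut N ⧸ R) = ((α k : MulAut N) : MulAut N ⧸ R) :=
    fun k i => (mem_bigSub.mp k.property) i
  -- the sigma element
  have memσ : (((SemidirectProduct.inr (Multiplicative.ofAdd (1 : ZMod q)) : Tam N q),
      (1 : MulAut N), (1 : M)) : Pam N q M) ∈ bigSub N q M := by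
    rw [mem_bigSub]
    intro i
    rw [SemidirectProduct.left_inr]
    rfl
  obtain ⟨kσ, hkσK, hkσ⟩ := lift ⟨_, memσ⟩
  have hkσ : τ kσ = SemidirectProduct.inr (Multiplicative.ofAdd (1 : ZMod q)) := hkσ
  have hσpow : (Multiplicative.ofAdd (1 : ZMod q)) ^ q = 1 := by
    rw [← ofAdd_nsmul, nsmul_eq_mul, mul_one, ZMod.natCast_self, ofAdd_zero]
  have haσ : α kσ = 1 := by
    have hτpow : τ (kσ ^ q) = 1 := by
      rw [map_pow, hkσ, ← map_pow, hσpow, map_one]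
    have hkσq : kσ ^ q = 1 := by
      have hm : kσ ^ q ∈ K ⊓ (fHom N q M).range := ⟨K.pow_mem hkσK q, hker _ hτpow⟩
      rw [hKinf] at hm
      exact Subgroup.mem_bot.mp hm
    have hαq : (α kσ) ^ q = 1 := by
      rw [← map_pow, hkσq, map_one]
    have haσR : α kσ ∈ R := by
      have h0 := hcond kσ 0
      rw [hkσ] at h0
      rw [← QuotientGroup.eq_one_iff]
      rw [← h0, SemidirectProduct.left_inr]
      rfl
    obtain ⟨n₀, hn₀⟩ := haσR
    have hn₀q : n₀ ^ q = 1 := by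
      apply conj_eq_one hz
      rw [map_pow, hn₀, hαq]
    have hone : n₀ = 1 := by
      have hd := orderOf_dvd_of_pow_eq_one hn₀q
      rcases (Nat.Prime.eq_one_or_self_of_dvd hq _ hd) with h1 | h1
      · exact orderOf_eq_one_iff.mp h1
      · exact absurd (h1 ▸ orderOf_dvd_natCard n₀) hqN
    rw [← hn₀, hone, map_one]
  -- the delta elements
  have memδ : ∀ (i : ZMod q) (n : N),
      (((SemidirectProduct.inl (Pi.mulSingle i (MulAut.conj n)) : Tam N q),
        (1 : MulAut N), (1 : M)) : Pam N q M) ∈ bigSub N q M := by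
    intro i n
    rw [mem_bigSub]
    intro i'
    rw [SemidirectProduct.left_inl]
    have h1 : (((Pi.mulSingle i (MulAut.conj n) : ZMod q → MulAut N) i' : MulAut N) :
        MulAut N ⧸ (MulAut.conj : N →* MulAut N).range) = 1 := by
      rw [QuotientGroup.eq_one_iff, Pi.mulSingle_apply]
      split_ifs
      · exact MonoidHom.mem_range.mpr ⟨n, rfl⟩
      · exact one_mem _
    rw [h1]
    exact (QuotientGroup.mk_one _).symm
  have hδ : ∀ (i : ZMod q) (n : N), ∃ k ∈ K,
      τ k = SemidirectProduct.inl (Pi.mulSingle i (MulAut.conj n)) := by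
    intro i n
    exact lift ⟨_, memδ i n⟩
  choose kδ hkδK hkδτ using hδ
  -- multiplicativity
  have hmul : ∀ (i : ZMod q) (n m : N), kδ i (n * m) = kδ i n * kδ i m := by
    intro i n m
    apply uniq _ _ (hkδK i (n * m)) (K.mul_mem (hkδK i n) (hkδK i m))
    rw [map_mul, hkδτ, hkδτ, hkδτ, ← map_mul, ← Pi.mulSingle_mul, ← map_mul]
  -- shifting
  have shift_single : ∀ (i : ZMod q) (x : MulAut N),
      (shiftHom N q (Multiplicative.ofAdd (1 : ZMod q))) (Pi.mulSingle i x) = Pi.mulSingle (i + 1) x := by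
    intro i x
    funext j
    rw [shiftHom_apply, toAdd_ofAdd, Pi.mulSingle_apply, Pi.mulSingle_apply]
    by_cases h : j = i + 1
    · rw [if_pos (by rw [h]; exact add_sub_cancel_right i 1), if_pos h]
    · rw [if_neg (fun hc => h (by rw [← hc]; exact (sub_add_cancel j 1).symm)), if_neg h]
  have hshift : ∀ (i : ZMod q) (n : N), kδ (i + 1) n = kσ * kδ i n * kσ⁻¹ := by
    intro i n
    apply uniq _ _ (hkδK (i + 1) n)
      (K.mul_mem (K.mul_mem hkσK (hkδK i n)) (K.inv_mem hkσK))
    rw [map_mul, map_mul, map_inv, hkδτ, hkδτ, hkσ, ← map_inv, ← SemidirectProduct.inl_aut,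
      shift_single]
  have hlamshift : ∀ (i : ZMod q) (n : N), α (kδ (i + 1) n) = α (kδ i n) := by
    intro i n
    have h := congrArg α (hshift i n)
    rw [map_mul, map_mul, map_inv, haσ, one_mul, inv_one, mul_one] at h
    exact h
  have hlam0 : ∀ (i : ZMod q) (n : N), α (kδ i n) = α (kδ 0 n) := by
    have hnat : ∀ (s : ℕ) (n : N), α (kδ ((s : ℕ) : ZMod q) n) = α (kδ 0 n) := by
      intro s
      induction s with
      | zero => intro n; norm_num
      | succ t ih =>
        intro n
        have hc : (((t + 1 : ℕ)) : ZMod q) = ((t : ℕ) : ZMod q) + 1 := by push_cast; ring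
        rw [hc, hlamshift, ih]
    intro i n
    have hi : ((i.val : ℕ) : ZMod q) = i := ZMod.natCast_rightInverse i
    rw [← hi, hnat]
  have hcomm : ∀ n m : N, Commute (α (kδ 0 n)) (α (kδ 0 m)) := by
    have hkcomm : ∀ n m : N, kδ 0 n * kδ 1 m = kδ 1 m * kδ 0 n := by
      intro n m
      apply uniq _ _ (K.mul_mem (hkδK 0 n) (hkδK 1 m)) (K.mul_mem (hkδK 1 m) (hkδK 0 n))
      rw [map_mul, map_mul, hkδτ, hkδτ, ← map_mul, ← map_mul]
      congr 1
      exact (Pi.mulSingle_commute (f := fun _ : ZMod q => MulAut N)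
        (zero_ne_one (α := ZMod q)) (MulAut.conj n) (MulAut.conj m)).eq
    intro n m
    have h := congrArg α (hkcomm n m)
    rw [map_mul, map_mul, hlam0 1 m] at h
    exact h
  have hlam1 : ∀ n : N, α (kδ 0 n) = 1 := by
    set Λ0 : N →* MulAut N := MonoidHom.mk' (fun n => α (kδ 0 n))
      (fun n m => by
        show α (kδ 0 (n * m)) = α (kδ 0 n) * α (kδ 0 m)
        rw [hmul 0 n m, map_mul]) with hΛ0
    have hker0 : commutator N ≤ Λ0.ker := by
      rw [commutator_def, Subgroup.commutator_le]
      intro g₁ _ g₂ _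
      rw [MonoidHom.mem_ker, map_commutatorElement]
      exact commutatorElement_eq_one_iff_commute.mpr (hcomm g₁ g₂)
    rw [hperf] at hker0
    intro n
    exact MonoidHom.mem_ker.mp (hker0 (Subgroup.mem_top n))
  -- core: any element of K lying over the "inner" part has trivial A-component
  have core1 : ∀ (s : Finset (ZMod q)) (v : ZMod q → MulAut N), (∀ i, v i ∈ R) →
      (∀ i ∉ s, v i = 1) → ∀ k ∈ K, τ k = SemidirectProduct.inl v → α k = 1 := by
    intro s
    induction s using Finset.induction_on with
    | empty =>
      intro v hv hsupp k hk hτ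
      have hv1 : v = 1 := funext fun i => hsupp i (Finset.notMem_empty i)
      have hτ1 : τ k = 1 := by rw [hτ, hv1, map_one]
      have hm : k ∈ K ⊓ (fHom N q M).range := ⟨hk, hker k hτ1⟩
      rw [hKinf] at hm
      rw [Subgroup.mem_bot.mp hm, map_one]
    | @insert i₀ s hi₀ ih =>
      intro v hv hsupp k hk hτ
      obtain ⟨n, hn⟩ := hv i₀
      set w : ZMod q → MulAut N := (Pi.mulSingle i₀ (v i₀) : ZMod q → MulAut N)⁻¹ * v with hw
      have hτ' : τ ((kδ i₀ n)⁻¹ * k) = SemidirectProduct.inl w := by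
        rw [map_mul, map_inv, hkδτ, hτ, hn, ← map_inv, ← map_mul, hw]
      have hv'R : ∀ i, w i ∈ R := by
        intro i
        rw [hw, Pi.mul_apply, Pi.inv_apply]
        refine mul_mem (inv_mem ?_) (hv i)
        rw [Pi.mulSingle_apply]
        split_ifs
        · exact hv i₀
        · exact one_mem _
      have hsupp' : ∀ i ∉ s, w i = 1 := by
        intro i his
        rw [hw, Pi.mul_apply, Pi.inv_apply]
        by_cases h : i = i₀
        · subst h
          rw [Pi.mulSingle_eq_same, inv_mul_cancel]
        · have hvi : v i = 1 := hsupp i (by simp [Finset.mem_insert, h, his])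
          rw [Pi.mulSingle_eq_of_ne h, hvi, inv_one, one_mul]
      have hα' := ih _ hv'R hsupp' _ (K.mul_mem (K.inv_mem (hkδK i₀ n)) hk) hτ'
      have hk' : k = kδ i₀ n * ((kδ i₀ n)⁻¹ * k) := by group
      rw [hk', map_mul, hα', mul_one, hlam0 i₀ n, hlam1 n]
  have core2 : ∀ k ∈ K, (∀ i, (τ k).left i ∈ R) → α k = 1 := by
    intro k hk hkl
    set s : ℕ := (Multiplicative.toAdd (τ k).right).val with hs
    have hσs : τ (kσ ^ s) = SemidirectProduct.inr ((τ k).right) := by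
      rw [map_pow, hkσ, ← map_pow]
      congr 1
      rw [← ofAdd_nsmul, nsmul_eq_mul, mul_one, hs,
        ZMod.natCast_rightInverse (Multiplicative.toAdd (τ k).right), ofAdd_toAdd]
    have hτ'' : τ (k * (kσ ^ s)⁻¹) = SemidirectProduct.inl ((τ k).left) := by
      rw [map_mul, map_inv, hσs]
      have h := SemidirectProduct.inl_left_mul_inr_right (τ k)
      calc τ k * (SemidirectProduct.inr (τ k).right)⁻¹
          = (SemidirectProduct.inl (τ k).left * SemidirectProduct.inr (τ k).right) *
            (SemidirectProduct.inr (τ k).right)⁻¹ :=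
            congrArg (fun z => z * (SemidirectProduct.inr (τ k).right)⁻¹) h.symm
        _ = SemidirectProduct.inl (τ k).left := mul_inv_cancel_right _ _
    have hα'' := core1 Finset.univ ((τ k).left) hkl (fun i hi => absurd (Finset.mem_univ i) hi) _
      (K.mul_mem hk (K.inv_mem (K.pow_mem hkσK s))) hτ''
    have hk'' : k = (k * (kσ ^ s)⁻¹) * kσ ^ s := by group
    rw [hk'', map_mul, hα'', one_mul, map_pow, haσ, one_pow]
  -- build the complement of Inn(N) in Aut(N)
  apply hno
  refine ⟨Subgroup.map α K, le_top, ?_, ?_⟩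
  · rw [Subgroup.eq_bot_iff_forall]
    intro x hx
    obtain ⟨hx1, hx2⟩ := hx
    obtain ⟨k, hkK, hka⟩ := Subgroup.mem_map.mp hx1
    have hαR : α k ∈ R := by rw [hka]; exact hx2
    have hleft : ∀ i, (τ k).left i ∈ R := by
      intro i
      rw [← QuotientGroup.eq_one_iff, hcond k i, QuotientGroup.eq_one_iff]
      exact hαR
    rw [← hka]
    exact core2 k hkK hleft
  · rw [Subgroup.coe_top]
    apply Set.eq_univ_iff_forall.mpr
    intro a
    have hmem : (((SemidirectProduct.inl (fun _ => a) : Tam N q), a, (1 : M)) : Pam N q M)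
        ∈ bigSub N q M := by
      rw [mem_bigSub]
      intro i
      rw [SemidirectProduct.left_inl]
    set ga : ↥(bigSub N q M) := ⟨_, hmem⟩ with hga
    have hg : ga ∈ (K : Set ↥(bigSub N q M)) * ((fHom N q M).range : Set ↥(bigSub N q M)) := by
      rw [hKmul, Subgroup.coe_top]
      trivial
    obtain ⟨k, hk, r, hr, hkr⟩ := Set.mem_mul.mp hg
    obtain ⟨p, hp⟩ := MonoidHom.mem_range.mp hr
    have haga : α ga = a := rfl
    have hdecomp : a = α k * MulAut.conj p.1 := by
      rw [← haga, ← hkr, map_mul]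
      congr 1
      rw [← hp]
      rfl
    rw [hdecomp]
    exact Set.mul_mem_mul (Subgroup.mem_map.mpr ⟨k, hk, rfl⟩)
      (MonoidHom.mem_range.mpr ⟨p.1, rfl⟩)

end GaschuetzCX

open GaschuetzCX

/-- If `N` is a finite perfect group with trivial center such that `Inn(N)` has no
complement in `Aut(N)`, then for every finite group `M`, Gaschütz' theorem does not
hold for `N × M`. -/
theorem not_gaschuetz_prod (N : Type u) [Group N] [Finite N]
    (hperf : commutator N = ⊤) (hz : Subgroup.center N = ⊥)
    (hno : ¬ HasComplementIn (MulAut.conj : N →* MulAut N).range ⊤)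
    (M : Type v) [Group M] [Finite M] :
    ¬ GaschuetzHolds (N × M) := by
  intro hG
  obtain ⟨q, hqge, hq⟩ := Nat.exists_infinite_primes (Nat.card N * Nat.card M + 1)
  have hpos : 0 < Nat.card N * Nat.card M := mul_pos Nat.card_pos Nat.card_pos
  have hqdvd : ¬ q ∣ Nat.card N * Nat.card M := by
    intro hd
    have := Nat.le_of_dvd hpos hd
    omega
  have hqN : ¬ q ∣ Nat.card N := fun h => hqdvd (Dvd.dvd.mul_right h _)
  haveI : NeZero q := ⟨hq.pos.ne'⟩
  haveI : Finite (MulAut N) :=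
    Finite.of_injective (fun (e : MulAut N) => (e : N → N)) (fun a b h => by
      apply MulEquiv.ext
      intro x
      exact congrFun h x)
  haveI : Finite (Tam N q) :=
    Finite.of_injective (fun (x : Tam N q) => (x.left, x.right))
      (fun a b h => SemidirectProduct.ext (congrArg Prod.fst h) (congrArg Prod.snd h))
  -- injectivity of the embedding
  have hinj : Function.Injective (fHom N q M) := by
    intro p p' h
    have h1 : MulAut.conj p.1 = MulAut.conj p'.1 :=
      congrArg (fun z : ↥(bigSub N q M) => (z : Pam N q M).2.1) h
    have h2 : p.2 = p'.2 :=
      congrArg (fun z : ↥(bigSub N q M) => (z : Pam N q M).2.2) h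
    have h3 : MulAut.conj (p.1 * p'.1⁻¹) = 1 := by
      rw [map_mul, map_inv, h1, mul_inv_cancel]
    have h4 : p.1 = p'.1 := mul_inv_eq_one.mp (conj_eq_one hz h3)
    exact Prod.ext_iff.mpr ⟨h4, h2⟩
  have hnormal : (fHom N q M).range.Normal := by
    rw [fHom_range_eq]
    exact MonoidHom.normal_ker _
  have hle : (fHom N q M).range ≤ (chiHom N q M).ker := by
    intro x hx
    rw [fHom_range_eq] at hx
    rw [MonoidHom.mem_ker, chiHom_apply, MonoidHom.mem_ker.mp hx, SemidirectProduct.one_right]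
  have hsurj : Function.Surjective (chiHom N q M) := by
    intro j
    have hmem : (((SemidirectProduct.inr j : Tam N q), (1 : MulAut N), (1 : M)) : Pam N q M)
        ∈ bigSub N q M := by
      rw [mem_bigSub]
      intro i
      rw [SemidirectProduct.left_inr]
      rfl
    refine ⟨⟨_, hmem⟩, ?_⟩
    rw [chiHom_apply]
    exact SemidirectProduct.right_inr j
  have hidx : ((chiHom N q M).ker).index = q := by
    rw [Subgroup.index_ker, MonoidHom.range_eq_top.mpr hsurj, Subgroup.card_top]
    exact (Nat.card_congr Multiplicative.toAdd).trans (Nat.card_zmod q)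
  have hcop : Nat.Coprime (Nat.card (N × M)) ((chiHom N q M).ker).index := by
    rw [hidx, Nat.card_prod]
    exact Nat.Coprime.symm ((Nat.Prime.coprime_iff_not_dvd hq).mpr hqdvd)
  have hcompl : HasComplementIn (fHom N q M).range ((chiHom N q M).ker) :=
    ⟨K0 N q M, complement_in_H q M⟩
  exact no_complement_top hperf hz hno hq hqN
    (hG (↥(bigSub N q M)) (fHom N q M) ((chiHom N q M).ker) hinj hnormal hle hcop hcompl)
end
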